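/- arXiv:1306.5415 — 13 statements merged into one kernel-verified Lean document; each statement's English description precedes it below -/
import Mathlib

section
/- For every positive integer n, the number of partitions of n in which each part k occurs at most k − 1 times equals the number of partitions of n in which no part is a perfect square. -/
/-!
Generalising Glaisher's theorem: if `i ↦ i * g i` is injective, partitions in which each part `i`
occurs fewer than `g i` times are equinumerous with partitions avoiding the parts `i * g i`.
Both generating functions, multiplied by `∏ (1 - Xⁱ)`, become `∏ (1 - X^(i * g i))`: on the first
side each factor `1 + Xⁱ + ⋯ + X^(i (g i - 1))` is a geometric sum, on the second side the
factors `1 / (1 - Xᵏ)` with `k` in the image of `i ↦ i * g i` are exactly the ones that survive.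
For `g = id` the forbidden parts are the squares.
-/

open Finset PowerSeries PowerSeries.WithPiTopology

namespace Nat.Partition

def countRestrictedBy (n : ℕ) (g : ℕ → ℕ) : Finset n.Partition :=
  univ.filter fun p ↦ ∀ i ∈ p.parts, p.parts.count i < g i

variable {g : ℕ → ℕ}

section Semiring

variable (R : Type*) [CommSemiring R] [TopologicalSpace R] [T2Space R]

theorem hasProd_powerSeriesMk_card_countRestrictedBy (hg : ∀ i, 0 < g (i + 1)) :
    HasProd (fun i ↦ ∑ j ∈ range (g (i + 1)), (X : R⟦X⟧) ^ ((i + 1) * j))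
      (PowerSeries.mk fun n ↦ (#(countRestrictedBy n g) : R)) := by
  convert hasProd_genFun (fun i c ↦ if c < g i then (1 : R) else 0) using 1
  · ext1 i
    obtain ⟨m, hm⟩ := Nat.exists_eq_add_of_lt (hg i)
    rw [hm, zero_add, sum_range_succ', tsum_eq_sum (s := range m), add_comm]
    · simp only [mul_zero, pow_zero, add_lt_add_iff_right, ite_smul, one_smul, zero_smul]
      exact congrArg (1 + ·) (sum_congr rfl fun j hj ↦ by simp [mem_range.mp hj])
    · intro j hj
      simp [mem_range.not.mp hj]
  · simp_rw [genFun, countRestrictedBy, card_filter, Finsupp.prod, prod_boole]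
    simp

end Semiring

section Ring

variable (R : Type*) [CommRing R] [TopologicalSpace R] [T2Space R] [IsTopologicalRing R]

theorem powerSeriesMk_card_countRestrictedBy_mul_tprod (hg : ∀ i, 0 < g (i + 1)) :
    PowerSeries.mk (fun n ↦ (#(countRestrictedBy n g) : R)) * ∏' i, (1 - X ^ (i + 1)) =
      ∏' i, (1 - X ^ ((i + 1) * g (i + 1))) := by
  have hprod := hasProd_powerSeriesMk_card_countRestrictedBy R hg
  rw [← hprod.tprod_eq, ← hprod.multipliable.tprod_mul (multipliable_one_sub_X_pow R)]
  exact tprod_congr fun i ↦ by simp_rw [pow_mul, geom_sum_mul_neg]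

open scoped Classical in
theorem powerSeriesMk_card_restricted_mul_tprod {h : ℕ → ℕ} (hh : Function.Injective h)
    (hh0 : h 0 = 0) :
    PowerSeries.mk (fun n ↦ (#(restricted n (· ∉ Set.range h)) : R)) * ∏' i, (1 - X ^ (i + 1)) =
      ∏' i, (1 - X ^ h (i + 1)) := by
  nontriviality R
  have hpos : ∀ i, 0 < h (i + 1) := fun i ↦
    Nat.pos_of_ne_zero fun hi ↦ by simpa using hh (hi.trans hh0.symm)
  have hprod := hasProd_powerSeriesMk_card_restricted R (· ∉ Set.range h)
  rw [← hprod.tprod_eq, ← hprod.multipliable.tprod_mul (multipliable_one_sub_X_pow R)]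
  simp_rw [ite_mul, one_mul, pow_mul]
  conv in fun b ↦ _ =>
    ext b
    rw [tsum_pow_mul_one_sub_of_constantCoeff_eq_zero (by simp)]
  -- the factor `1 - X ^ h (k + 1)` on the right sits at index `h (k + 1) - 1` on the left
  refine tprod_eq_tprod_of_ne_one_bij (fun k ↦ h (k.val + 1) - 1) ?_ ?_ ?_
  · intro a b hab
    exact Subtype.ext (Nat.succ_injective (hh (Nat.sub_one_cancel (hpos a) (hpos b) hab)))
  · intro i hi
    obtain ⟨k, hk⟩ : i + 1 ∈ Set.range h := by
      by_contra hne
      exact hi (by simp [hne])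
    obtain ⟨k, rfl⟩ := Nat.exists_eq_add_one_of_ne_zero (n := k) (by rintro rfl; omega)
    exact ⟨⟨k, by simp [hk, PowerSeries.ext_iff, coeff_X_pow]⟩, by simp [hk]⟩
  · intro k
    simp [Nat.sub_add_cancel (hpos k)]

end Ring

open scoped Classical in
theorem card_countRestrictedBy_eq_card_restricted (n : ℕ)
    (hg : Function.Injective fun i ↦ i * g i) :
    #(countRestrictedBy n g) = #(restricted n (· ∉ Set.range fun i ↦ i * g i)) := by
  have hg0 : ∀ i, 0 < g (i + 1) := fun i ↦ Nat.pos_of_ne_zero fun h0 ↦ by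
    simpa using @hg (i + 1) 0 (by simp [h0])
  have key := powerSeriesMk_card_countRestrictedBy_mul_tprod ℤ hg0
  rw [← powerSeriesMk_card_restricted_mul_tprod ℤ hg (by simp)] at key
  simpa using PowerSeries.ext_iff.mp (mul_right_cancel₀ (tprod_one_sub_X_pow_ne_zero ℤ) key) n

open scoped Classical in
theorem countRestrictedBy_id (n : ℕ) :
    countRestrictedBy n id = univ.filter fun p ↦ ∀ k, p.parts.count k ≤ k - 1 := by
  ext p
  simp only [countRestrictedBy, mem_filter, mem_univ, true_and, id]
  refine ⟨fun h k ↦ ?_, fun h i hi ↦ ?_⟩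
  · by_cases hk : k ∈ p.parts
    · have := h k hk
      omega
    · simp [Multiset.count_eq_zero_of_notMem hk]
  · have := p.parts_pos hi
    have := h i
    omega

open scoped Classical in
theorem restricted_notMem_range_mul_self (n : ℕ) :
    restricted n (· ∉ Set.range fun i ↦ i * i) =
      univ.filter fun p ↦ ∀ i ∈ p.parts, ¬ ∃ k : ℕ, 0 < k ∧ i = k ^ 2 := by
  ext p
  simp only [restricted, mem_filter, mem_univ, true_and]
  refine forall₂_congr fun i hi ↦ not_congr ⟨?_, ?_⟩
  · rintro ⟨k, rfl⟩
    refine ⟨k, Nat.pos_of_ne_zero ?_, (sq k).symm⟩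
    rintro rfl
    exact (p.parts_pos hi).ne' rfl
  · rintro ⟨k, -, rfl⟩
    exact ⟨k, (sq k).symm⟩

end Nat.Partition

theorem stmt_2_general (n : ℕ) :
    Nat.card {p : n.Partition // ∀ k, p.parts.count k ≤ k - 1} =
      Nat.card {p : n.Partition // ∀ i ∈ p.parts, ¬ ∃ k : ℕ, 0 < k ∧ i = k ^ 2} := by
  classical
  rw [Nat.card_eq_fintype_card, Nat.card_eq_fintype_card, Fintype.card_subtype,
    Fintype.card_subtype, ← Nat.Partition.countRestrictedBy_id,
    ← Nat.Partition.restricted_notMem_range_mul_self]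
  exact Nat.Partition.card_countRestrictedBy_eq_card_restricted n
    fun a b hab ↦ Nat.mul_self_inj.mp hab

/-- Andrews' theorem: the number of partitions of `n` in which each part `k` occurs at most
`k - 1` times equals the number of partitions of `n` with no perfect-square part. -/
theorem stmt_2 (n : ℕ) (hn : 0 < n) :
    Nat.card {p : n.Partition // ∀ k, p.parts.count k ≤ k - 1} =
      Nat.card {p : n.Partition // ∀ i ∈ p.parts, ¬ ∃ k : ℕ, 0 < k ∧ i = k ^ 2} :=
  stmt_2_general n
end

section
/- Let r ≥ 2 be a fixed integer. For every positive integer n, the number of partitions of n in which each part k occurs at most (r − 1)(k − 1) times equals the number of partitions of n in which no part is a 2r-gonal number, i.e., no part is of the form k·((r − 1)·k − (r − 2)) for some positive integer k. -/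
/-!
With `g k = k * (b k + 1)`, the generating function of partitions in which each part `k` occurs
at most `b k` times is `∏ (1 - q ^ g k) / (1 - q ^ k)`. If `g` is injective, every numerator
cancels the denominator with the same exponent, leaving `∏_{k ∉ g(ℕ₊)} 1 / (1 - q ^ k)`, the
generating function of partitions with no part in the image of `g`. For `b k = (r - 1) * (k - 1)`,
`g k` is the `k`-th `2r`-gonal number, and `g` is strictly monotone because `b` is monotone.
-/

open Finset PowerSeries PowerSeries.WithPiTopology

theorem Monotone.strictMono_mul_add_one {b : ℕ → ℕ} (hb : Monotone b) :
    StrictMono fun k ↦ k * (b k + 1) := fun i j hij ↦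
  calc i * (b i + 1) ≤ i * (b j + 1) := Nat.mul_le_mul_left _ (Nat.succ_le_succ (hb hij.le))
    _ < j * (b j + 1) := Nat.mul_lt_mul_of_pos_right hij (Nat.succ_pos _)

namespace Nat.Partition

def countBounded (n : ℕ) (b : ℕ → ℕ) : Finset n.Partition :=
  univ.filter fun p ↦ ∀ i ∈ p.parts, p.parts.count i ≤ b i

theorem hasProd_powerSeriesMk_card_countBounded (R : Type*) [CommSemiring R] [TopologicalSpace R]
    [T2Space R] (b : ℕ → ℕ) :
    HasProd (fun i ↦ ∑ j ∈ range (b (i + 1) + 1), (X : R⟦X⟧) ^ ((i + 1) * j))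
      (PowerSeries.mk fun n ↦ (#(countBounded n b) : R)) := by
  convert hasProd_genFun (fun i c ↦ if c ≤ b i then (1 : R) else 0) using 1
  · ext1 i
    rw [sum_range_succ', add_comm, mul_zero, pow_zero]
    congr 1
    rw [tsum_eq_sum (s := range (b (i + 1))) fun j hj ↦ by simp_all]
    exact sum_congr rfl fun j hj ↦ by simp [Nat.succ_le_of_lt (mem_range.mp hj)]
  · simp_rw [genFun, countBounded, card_filter, Finsupp.prod, prod_boole]
    simp

section Ring

variable (R : Type*) [CommRing R] [TopologicalSpace R]

open scoped Classical in
theorem hasProd_ite_one_sub_X_pow_iff {g : ℕ → ℕ} (hg : Function.Injective g)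
    (hg0 : ∀ k, g (k + 1) ≠ 0) {a : R⟦X⟧} :
    HasProd (fun i ↦ if ¬ ∃ k, 0 < k ∧ i + 1 = g k then 1 else 1 - (X : R⟦X⟧) ^ (i + 1)) a ↔
      HasProd (fun i ↦ 1 - (X : R⟦X⟧) ^ g (i + 1)) a := by
  have hsucc (i : ℕ) : g (i + 1) - 1 + 1 = g (i + 1) :=
    Nat.sub_add_cancel (Nat.pos_of_ne_zero (hg0 i))
  have hinj : Function.Injective fun i ↦ g (i + 1) - 1 := fun i j hij ↦ by
    have := hg (show g (i + 1) = g (j + 1) by rw [← hsucc i, ← hsucc j]; exact congrArg (· + 1) hij)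
    omega
  rw [← hinj.hasProd_iff]
  · refine iff_of_eq (congrArg (HasProd · a) (funext fun i ↦ ?_))
    simp only [Function.comp_apply, hsucc]
    rw [if_neg (not_not.mpr ⟨i + 1, i.succ_pos, rfl⟩)]
  · rintro x hx
    rw [if_pos]
    rintro ⟨k, hk, hxk⟩
    obtain ⟨j, rfl⟩ := Nat.exists_eq_add_one_of_ne_zero hk.ne'
    exact hx ⟨j, show g (j + 1) - 1 = x by omega⟩

variable [T2Space R] [IsTopologicalRing R]

theorem hasProd_powerSeriesMk_card_countBounded_mul (b : ℕ → ℕ) :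
    HasProd (fun i ↦ 1 - (X : R⟦X⟧) ^ ((i + 1) * (b (i + 1) + 1)))
      ((PowerSeries.mk fun n ↦ (#(countBounded n b) : R)) * ∏' i, (1 - X ^ (i + 1))) := by
  refine ((hasProd_powerSeriesMk_card_countBounded R b).mul
    (multipliable_one_sub_X_pow R).hasProd).congr_fun fun i ↦ ?_
  simp only [pow_mul, geom_sum_mul_neg]

theorem hasProd_powerSeriesMk_card_restricted_mul (p : ℕ → Prop) [DecidablePred p] :
    HasProd (fun i ↦ if p (i + 1) then 1 else 1 - (X : R⟦X⟧) ^ (i + 1))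
      ((PowerSeries.mk fun n ↦ (#(restricted n p) : R)) * ∏' i, (1 - X ^ (i + 1))) := by
  refine ((hasProd_powerSeriesMk_card_restricted R p).mul
    (multipliable_one_sub_X_pow R).hasProd).congr_fun fun i ↦ ?_
  split_ifs
  · simp only [pow_mul]
    rw [tsum_pow_mul_one_sub_of_constantCoeff_eq_zero (by simp)]
  · simp [*]

end Ring

open scoped Classical in
theorem card_countBounded_eq_card_restricted (n : ℕ) {b : ℕ → ℕ}
    (hb : Function.Injective fun k ↦ k * (b k + 1)) :
    #(countBounded n b) = #(restricted n fun m ↦ ¬ ∃ k, 0 < k ∧ m = k * (b k + 1)) := by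
  have hA := hasProd_powerSeriesMk_card_countBounded_mul ℤ b
  have hB := hasProd_powerSeriesMk_card_restricted_mul ℤ (fun m ↦ ¬ ∃ k, 0 < k ∧ m = k * (b k + 1))
  rw [hasProd_ite_one_sub_X_pow_iff ℤ hb fun k ↦ by positivity] at hB
  have hGF := mul_right_cancel₀ (tprod_one_sub_X_pow_ne_zero ℤ) (hA.unique hB)
  have := congrArg (coeff n) hGF
  rw [coeff_mk, coeff_mk] at this
  exact_mod_cast this

end Nat.Partition

theorem stmt_3_general (r : ℕ) (hr : 2 ≤ r) (n : ℕ) :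
    Nat.card {p : n.Partition // ∀ k, p.parts.count k ≤ (r - 1) * (k - 1)} =
      Nat.card {p : n.Partition //
        ∀ i ∈ p.parts, ¬ ∃ k : ℕ, 0 < k ∧ i = k * ((r - 1) * k - (r - 2))} := by
  classical
  have hb : Monotone fun k ↦ (r - 1) * (k - 1) := fun i j hij ↦
    Nat.mul_le_mul_left _ (Nat.sub_le_sub_right hij 1)
  rw [Nat.card_eq_fintype_card, Nat.card_eq_fintype_card, Fintype.card_subtype,
    Fintype.card_subtype]
  convert Nat.Partition.card_countBounded_eq_card_restricted n hb.strictMono_mul_add_one.injective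
    using 2
  · ext p
    simp only [Nat.Partition.countBounded, mem_filter, mem_univ, true_and]
    refine ⟨fun h i _ ↦ h i, fun h k ↦ ?_⟩
    by_cases hk : k ∈ p.parts
    · exact h k hk
    · simp [Multiset.count_eq_zero_of_notMem hk]
  · have hgon (k : ℕ) (hk : 0 < k) : (r - 1) * (k - 1) + 1 = (r - 1) * k - (r - 2) := by
      have : r - 1 ≤ (r - 1) * k := Nat.le_mul_of_pos_right _ hk
      rw [Nat.mul_sub_one]
      omega
    ext p
    simp only [Nat.Partition.restricted, mem_filter, mem_univ, true_and]
    exact forall₂_congr fun i _ ↦ not_congr <| exists_congr fun k ↦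
      and_congr_right fun hk ↦ by rw [hgon k hk]

/-- For fixed `r ≥ 2`, the number of partitions of `n` in which each part `k` occurs at most
`(r - 1) * (k - 1)` times equals the number of partitions of `n` in which no part is a
`2r`-gonal number `k * ((r - 1) * k - (r - 2))`. -/
theorem stmt_3 (r : ℕ) (hr : 2 ≤ r) (n : ℕ) (hn : 0 < n) :
    Nat.card {p : n.Partition // ∀ k, p.parts.count k ≤ (r - 1) * (k - 1)} =
      Nat.card {p : n.Partition //
        ∀ i ∈ p.parts, ¬ ∃ k : ℕ, 0 < k ∧ i = k * ((r - 1) * k - (r - 2))} :=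
  stmt_3_general r hr n
end

section
/- Let r ≥ 2 be a fixed integer. For every positive integer n, the number of partitions of n in which, for each k ≥ 1, the odd part 2k − 1 occurs at most (2r − 1)(k − 1) times while even parts occur without restriction, equals the number of partitions of n in which no part is an odd-subscripted (2r + 1)-gonal number, i.e., no part is of the form (2k − 1)·((2r − 1)(k − 1) + 1) for some positive integer k. -/
/-!
Multiplying a partition generating function by `∏ (1 - X ^ i)` turns the factor of a part `i`
whose multiplicity is capped below `m i` into `1 - X ^ (i * m i)`, and the factor of a forbidden
part `j` into `1 - X ^ j`. So capping the parts of `S` below `m` is equinumerous with forbidding the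
parts `i * m i`, `i ∈ S`, as soon as these products are distinct (Glaisher's theorem is the case of
constant `m`). For the odd part `2k - 1` with cap `(2r - 1)(k - 1) + 1` the products are the
odd-subscripted `(2r + 1)`-gonal numbers, which increase strictly with `k`.
-/

open Finset PowerSeries PowerSeries.WithPiTopology

namespace Nat.Partition

section Factors

variable {R : Type*} [CommRing R] [TopologicalSpace R]

theorem one_add_tsum_ite_lt_mul_one_sub_X_pow {M : ℕ} (hM : 0 < M) (i : ℕ) :
    (1 + ∑' j, (if j + 1 < M then (1 : R) else 0) • (X : R⟦X⟧) ^ (i * (j + 1))) * (1 - X ^ i) =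
      1 - X ^ (i * M) := by
  obtain ⟨M, rfl⟩ : ∃ M', M = M' + 1 := ⟨M - 1, by omega⟩
  rw [tsum_eq_sum (s := range M) fun j hj ↦ by simp_all, pow_mul,
    ← geom_sum_mul_neg ((X : R⟦X⟧) ^ i), sum_range_succ', add_comm]
  congr 2
  exact sum_congr rfl fun j hj ↦ by rw [if_pos (by simpa using hj), one_smul, pow_mul]

variable [IsTopologicalRing R] [T2Space R]

theorem one_add_tsum_mul_one_sub_X_pow {i : ℕ} (hi : i ≠ 0) :
    (1 + ∑' j, (1 : R) • (X : R⟦X⟧) ^ (i * (j + 1))) * (1 - X ^ i) = 1 := by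
  have hX : constantCoeff ((X : R⟦X⟧) ^ i) = 0 := by simp [hi]
  simp_rw [one_smul, pow_mul]
  conv_rhs => rw [← tsum_pow_mul_one_sub_of_constantCoeff_eq_zero hX]
  rw [(summable_pow_of_constantCoeff_eq_zero hX).tsum_eq_zero_add, pow_zero]

end Factors

variable {S : Set ℕ} {m : ℕ → ℕ}

open scoped Classical in
theorem genFun_eq_mk_card_forall_count_lt (hm : ∀ i ∈ S, 0 < m i) :
    genFun (fun i c ↦ if i ∈ S → c < m i then (1 : ℤ) else 0) =
      PowerSeries.mk fun n ↦ (Nat.card {p : n.Partition // ∀ i ∈ S, p.parts.count i < m i} : ℤ) := by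
  ext n
  have hcount (p : n.Partition) : (∀ i ∈ p.parts, i ∈ S → p.parts.count i < m i) ↔
      ∀ i ∈ S, p.parts.count i < m i := by
    refine ⟨fun h i hi ↦ ?_, fun h i _ ↦ h i⟩
    by_cases hp : i ∈ p.parts
    · exact h i hp hi
    · simpa [Multiset.count_eq_zero_of_notMem hp] using hm i hi
  rw [coeff_genFun, coeff_mk, Nat.card_eq_fintype_card, Fintype.card_subtype, card_filter,
    Nat.cast_sum]
  refine sum_congr rfl fun p _ ↦ ?_
  rw [Finsupp.prod, prod_boole]
  simp only [Multiset.toFinsupp_support, Multiset.mem_toFinset, Multiset.toFinsupp_apply, hcount,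
    Nat.cast_ite, Nat.cast_one, Nat.cast_zero]

theorem mk_card_forall_count_lt_mul_tprod (hm : ∀ i ∈ S, 0 < m i) :
    (PowerSeries.mk fun n ↦ (Nat.card {p : n.Partition // ∀ i ∈ S, p.parts.count i < m i} : ℤ)) *
        ∏' i, (1 - X ^ (i + 1)) =
      ∏' i, S.mulIndicator (fun i ↦ 1 - X ^ (i * m i)) (i + 1) := by
  classical
  rw [← genFun_eq_mk_card_forall_count_lt hm, genFun_eq_tprod,
    ← (multipliable_genFun fun i c ↦ if i ∈ S → c < m i then (1 : ℤ) else 0).tprod_mul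
      (multipliable_one_sub_X_pow ℤ)]
  refine tprod_congr fun i ↦ ?_
  by_cases hi : i + 1 ∈ S
  · rw [Set.mulIndicator_of_mem hi]
    convert one_add_tsum_ite_lt_mul_one_sub_X_pow (R := ℤ) (hm _ hi) (i + 1) using 6
    simp [hi]
  · rw [Set.mulIndicator_of_notMem hi]
    convert one_add_tsum_mul_one_sub_X_pow (R := ℤ) i.succ_ne_zero using 6
    simp [hi]

theorem tprod_mulIndicator_one_sub_X_pow_mul_eq_image {R : Type*} [CommRing R] [Nontrivial R]
    [TopologicalSpace R] (hm : ∀ i ∈ S, 0 < m i) (hinj : S.InjOn fun i ↦ i * m i) :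
    ∏' i, S.mulIndicator (fun i ↦ 1 - (X : R⟦X⟧) ^ (i * m i)) (i + 1) =
      ∏' j, ((fun i ↦ i * m i) '' S).mulIndicator (fun j ↦ 1 - X ^ j) (j + 1) := by
  set F : ℕ → R⟦X⟧ := fun i ↦ S.mulIndicator (fun i ↦ 1 - X ^ (i * m i)) (i + 1)
  have hpos {i : ℕ} (hi : i + 1 ∈ S) : 0 < (i + 1) * m (i + 1) := Nat.mul_pos i.succ_pos (hm _ hi)
  have hS {i : ℕ} (hi : i ∈ Function.mulSupport F) : i + 1 ∈ S := Set.mem_of_mulIndicator_ne_one hi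
  symm
  refine tprod_eq_tprod_of_ne_one_bij (fun i ↦ (i.1 + 1) * m (i.1 + 1) - 1) ?_ ?_ ?_
  · rintro ⟨a, ha⟩ ⟨b, hb⟩ h
    have := hpos (hS ha)
    have := hpos (hS hb)
    refine Subtype.ext (Nat.succ_injective (hinj (hS ha) (hS hb) ?_))
    change (a + 1) * m (a + 1) - 1 = (b + 1) * m (b + 1) - 1 at h
    change (a + 1) * m (a + 1) = (b + 1) * m (b + 1)
    omega
  · intro j hj
    obtain ⟨_ | i, hi, hij⟩ := Set.mem_of_mulIndicator_ne_one hj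
    · simp at hij
    refine ⟨⟨i, ?_⟩, by simp only at hij ⊢; omega⟩
    rw [Function.mem_mulSupport, Set.mulIndicator_of_mem hi, ne_eq, sub_eq_self]
    exact fun h ↦ by simpa using congrArg (coeff ((i + 1) * m (i + 1))) h
  · rintro ⟨i, hi⟩
    have hi' := hpos (hS hi)
    simp only [Nat.sub_add_cancel hi']
    rw [Set.mulIndicator_of_mem (hS hi), Set.mulIndicator_of_mem (Set.mem_image_of_mem _ (hS hi))]

theorem card_forall_count_lt_eq_card_forall_notMem_image (hm : ∀ i ∈ S, 0 < m i)
    (hinj : S.InjOn fun i ↦ i * m i) (n : ℕ) :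
    Nat.card {p : n.Partition // ∀ i ∈ S, p.parts.count i < m i} =
      Nat.card {p : n.Partition // ∀ i ∈ p.parts, i ∉ (fun i ↦ i * m i) '' S} := by
  have hS := mk_card_forall_count_lt_mul_tprod hm
  have hT := mk_card_forall_count_lt_mul_tprod (S := (fun i ↦ i * m i) '' S) (m := fun _ ↦ 1)
    fun _ _ ↦ one_pos
  simp only [mul_one] at hT
  rw [tprod_mulIndicator_one_sub_X_pow_mul_eq_image hm hinj, ← hT] at hS
  have hcoeff := congrArg (coeff n) (mul_right_cancel₀ (tprod_one_sub_X_pow_ne_zero ℤ) hS)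
  simp only [coeff_mk, Nat.cast_inj, Nat.lt_one_iff, Multiset.count_eq_zero] at hcoeff
  rw [hcoeff]
  exact Nat.card_congr (Equiv.subtypeEquivRight fun p ↦
    ⟨fun h i hi hT ↦ h i hT hi, fun h i hT hi ↦ h i hi hT⟩)

end Nat.Partition

theorem strictMono_mul_mul_div_two_add_one (a : ℕ) : StrictMono fun i ↦ i * (a * (i / 2) + 1) :=
  fun _ _ hij ↦ Nat.mul_lt_mul_of_lt_of_le hij
    (Nat.succ_le_succ (Nat.mul_le_mul_left a (Nat.div_le_div_right hij.le))) (Nat.succ_pos _)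

theorem forall_le_mul_pred_iff_forall_odd_lt (a : ℕ) (c : ℕ → ℕ) :
    (∀ k, 1 ≤ k → c (2 * k - 1) ≤ a * (k - 1)) ↔ ∀ i ∈ {i | Odd i}, c i < a * (i / 2) + 1 := by
  refine ⟨fun h i ⟨k, hk⟩ ↦ ?_, fun h k hk ↦ ?_⟩
  · have := h (k + 1) k.succ_pos
    rw [hk, show 2 * (k + 1) - 1 = 2 * k + 1 by omega, show (2 * k + 1) / 2 = k by omega] at *
    exact Nat.lt_succ_of_le this
  · have := h (2 * k - 1) ⟨k - 1, by omega⟩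
    rw [show (2 * k - 1) / 2 = k - 1 by omega] at this
    exact Nat.le_of_lt_succ this

theorem exists_eq_mul_mul_pred_add_one_iff_mem_image (a i : ℕ) :
    (∃ k, 1 ≤ k ∧ i = (2 * k - 1) * (a * (k - 1) + 1)) ↔
      i ∈ (fun i ↦ i * (a * (i / 2) + 1)) '' {i | Odd i} := by
  constructor
  · rintro ⟨k, hk, rfl⟩
    exact ⟨2 * k - 1, ⟨k - 1, by omega⟩, by simp only [show (2 * k - 1) / 2 = k - 1 by omega]⟩
  · rintro ⟨_, ⟨k, rfl⟩, rfl⟩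
    refine ⟨k + 1, k.succ_pos, ?_⟩
    simp only [show (2 * k + 1) / 2 = k by omega, show 2 * (k + 1) - 1 = 2 * k + 1 by omega,
      Nat.add_sub_cancel]

open Nat.Partition in
theorem stmt_4_general (r : ℕ) (n : ℕ) :
    Nat.card {p : n.Partition //
        ∀ k : ℕ, 1 ≤ k → p.parts.count (2 * k - 1) ≤ (2 * r - 1) * (k - 1)} =
      Nat.card {p : n.Partition //
        ∀ i ∈ p.parts, ¬ ∃ k : ℕ, 1 ≤ k ∧ i = (2 * k - 1) * ((2 * r - 1) * (k - 1) + 1)} := by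
  simp_rw [exists_eq_mul_mul_pred_add_one_iff_mem_image]
  calc _ = Nat.card {p : n.Partition //
          ∀ i ∈ {i | Odd i}, p.parts.count i < (2 * r - 1) * (i / 2) + 1} :=
        Nat.card_congr (Equiv.subtypeEquivRight fun p ↦
          forall_le_mul_pred_iff_forall_odd_lt _ (p.parts.count ·))
    _ = _ := card_forall_count_lt_eq_card_forall_notMem_image (fun _ _ ↦ Nat.succ_pos _)
        (strictMono_mul_mul_div_two_add_one _).injective.injOn n

/-- For fixed `r ≥ 2`, the number of partitions of `n` in which each odd part `2k - 1` occurs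
at most `(2r - 1) * (k - 1)` times (even parts unrestricted) equals the number of partitions
of `n` in which no part is an odd-subscripted `(2r + 1)`-gonal number
`(2k - 1) * ((2r - 1) * (k - 1) + 1)`. -/
theorem stmt_4 (r : ℕ) (hr : 2 ≤ r) (n : ℕ) (hn : 0 < n) :
    Nat.card {p : n.Partition //
        ∀ k : ℕ, 1 ≤ k → p.parts.count (2 * k - 1) ≤ (2 * r - 1) * (k - 1)} =
      Nat.card {p : n.Partition //
        ∀ i ∈ p.parts, ¬ ∃ k : ℕ, 1 ≤ k ∧ i = (2 * k - 1) * ((2 * r - 1) * (k - 1) + 1)} :=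
  stmt_4_general r n
end

section
/- For every positive integer n, the number of partitions of n into distinct parts none of which is divisible by 3 equals the number of partitions of n into parts congruent to 1 or 5 modulo 6. -/
/-!
Both counts are coefficients of infinite products: `∏_{3 ∤ k} (1 + X^k)` and
`∏_{3 ∤ k, 2 ∤ k} 1 / (1 - X^k)`. After multiplying by `∏_{3 ∤ k} (1 - X^k)`, the first becomes
`∏_{3 ∤ k} (1 - X^{2k})` and the second `∏_{3 ∤ k, 2 ∣ k} (1 - X^k)`, and these agree because
`k ↦ 2k` maps the integers prime to `3` onto the even integers prime to `3`. The same argument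
proves Glaisher's theorem (at most `m - 1` copies of each part versus no part divisible by `m`)
for partitions into parts from any set `p` with `p (m * k) ↔ p k`.
-/

open Finset PowerSeries PowerSeries.WithPiTopology

namespace Nat.Partition

variable (R : Type*) [TopologicalSpace R]

theorem hasProd_powerSeriesMk_card_restricted_inter_countRestricted [CommSemiring R] [T2Space R]
    (p : ℕ → Prop) [DecidablePred p] {m : ℕ} (hm : 0 < m) :
    HasProd (fun i ↦ if p (i + 1) then ∑ j ∈ range m, X ^ ((i + 1) * j) else 1)
      (PowerSeries.mk fun n ↦ (#(restricted n p ∩ countRestricted n m) : R)) := by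
  nontriviality R using Subsingleton.eq_one (α := R⟦X⟧)
  convert! hasProd_genFun (fun i c ↦ if p i ∧ c < m then (1 : R) else 0) using 1
  · ext1 i
    by_cases hpi : p (i + 1)
    · simp only [hpi, true_and, if_true]
      rw [sum_range_eq_add_Ico _ hm, sum_Ico_eq_sum_range]
      congrm $(by simp) + ?_
      trans ∑ k ∈ range (m - 1), (if k + 1 < m then (1 : R) else 0) • X ^ ((i + 1) * (k + 1))
      · refine sum_congr rfl fun b hb ↦ ?_
        have : b + 1 < m := by grind
        simp [add_comm 1 b, this]
      · exact (tsum_eq_sum (fun b hb ↦ smul_eq_zero_of_left (by simpa using hb) _)).symm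
    · simp [hpi]
  · simp_rw [genFun, restricted, countRestricted, ← filter_and, card_filter, Finsupp.prod,
      prod_boole]
    simp [forall_and]

theorem multipliable_ite_one_sub_X_pow [CommRing R] (p : ℕ → Prop) [DecidablePred p] :
    Multipliable fun i ↦ if p (i + 1) then 1 - (X : R⟦X⟧) ^ (i + 1) else 1 := by
  nontriviality R
  have h : (fun i ↦ if p (i + 1) then 1 - (X : R⟦X⟧) ^ (i + 1) else 1) =
      fun i ↦ 1 + if p (i + 1) then -X ^ (i + 1) else 0 := by
    ext1 i
    split_ifs <;> ring
  rw [h]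
  refine multipliable_one_add_of_tendsto_order_atTop_nhds_top _ <|
    ENat.tendsto_nhds_top_iff_natCast_lt.mpr fun n ↦ Filter.eventually_atTop.mpr ⟨n, fun k hk ↦ ?_⟩
  split_ifs
  · rw [order_neg, order_X_pow]
    exact_mod_cast Nat.lt_add_one_of_le hk
  · simp

theorem isUnit_tprod_ite_one_sub_X_pow [CommRing R] [T2Space R] (p : ℕ → Prop)
    [DecidablePred p] : IsUnit (∏' i, if p (i + 1) then 1 - (X : R⟦X⟧) ^ (i + 1) else 1) := by
  rw [isUnit_iff_constantCoeff,
    (multipliable_ite_one_sub_X_pow R p).map_tprod _ (continuous_constantCoeff R)]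
  simp [apply_ite]

theorem tprod_ite_geom_sum_eq_tprod_ite_tsum [CommRing R] [T2Space R] [IsTopologicalRing R]
    (p : ℕ → Prop) [DecidablePred p] {m : ℕ} (hm : 0 < m) (hp : ∀ k, p (m * k) ↔ p k) :
    (∏' i, if p (i + 1) then ∑ j ∈ range m, (X : R⟦X⟧) ^ ((i + 1) * j) else 1) =
      ∏' i, if p (i + 1) ∧ ¬ m ∣ i + 1 then ∑' j, (X : R⟦X⟧) ^ ((i + 1) * j) else 1 := by
  -- after multiplying by `∏ (1 - X^(i+1))` over the `p`-parts, both sides become `∏' g`: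
  -- the right one factor by factor, the left one along the reindexing `i + 1 ↦ (i + 1) * m`
  let g : ℕ → R⟦X⟧ := fun k ↦ if p (k + 1) ∧ m ∣ k + 1 then 1 - X ^ (k + 1) else 1
  refine (isUnit_tprod_ite_one_sub_X_pow R p).mul_right_cancel ?_
  rw [← (hasProd_powerSeriesMk_card_restricted_inter_countRestricted R p hm).multipliable.tprod_mul
      (multipliable_ite_one_sub_X_pow R p),
    ← (multipliable_powerSeriesMk_card_restricted R (fun k ↦ p k ∧ ¬ m ∣ k)).tprod_mul
      (multipliable_ite_one_sub_X_pow R p)]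
  have hleft : ∀ i, (if p (i + 1) then ∑ j ∈ range m, (X : R⟦X⟧) ^ ((i + 1) * j) else 1) *
      (if p (i + 1) then 1 - X ^ (i + 1) else 1) = g ((i + 1) * m - 1) := by
    intro i
    have hk : (i + 1) * m - 1 + 1 = m * (i + 1) := by grind
    simp only [g, hk, hp, dvd_mul_right, and_true]
    split_ifs
    · simp_rw [mul_comm m, pow_mul, geom_sum_mul_neg]
    · exact one_mul 1
  have hright : ∀ i, (if p (i + 1) ∧ ¬ m ∣ i + 1 then ∑' j, (X : R⟦X⟧) ^ ((i + 1) * j) else 1) *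
      (if p (i + 1) then 1 - X ^ (i + 1) else 1) = g i := by
    intro i
    by_cases hpi : p (i + 1)
    · by_cases hmi : m ∣ i + 1
      · simp [g, hpi, hmi]
      · simp only [g, hpi, hmi, not_false_eq_true, and_self, and_false, if_true, if_false]
        simp_rw [pow_mul]
        exact tsum_pow_mul_one_sub_of_constantCoeff_eq_zero (by simp)
    · simp [g, hpi]
  have hinj : Function.Injective fun i ↦ (i + 1) * m - 1 := fun a b h ↦
    Nat.succ_injective <| Nat.eq_of_mul_eq_mul_right hm <|
      Nat.sub_one_cancel (by positivity) (by positivity) h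
  have hsupp : Function.mulSupport g ⊆ Set.range fun i ↦ (i + 1) * m - 1 := by
    intro k hk
    obtain ⟨j, hj⟩ : m ∣ k + 1 := by
      by_contra h
      simp [g, h] at hk
    exact ⟨j - 1, by grind⟩
  rw [tprod_congr hleft, tprod_congr hright]
  exact hinj.tprod_eq hsupp

theorem card_restricted_inter_countRestricted_eq_card_restricted (n : ℕ) (p : ℕ → Prop)
    [DecidablePred p] {m : ℕ} (hm : 0 < m) (hp : ∀ k, p (m * k) ↔ p k) :
    #(restricted n p ∩ countRestricted n m) = #(restricted n fun k ↦ p k ∧ ¬ m ∣ k) := by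
  have h : (PowerSeries.mk fun n ↦ (#(restricted n p ∩ countRestricted n m) : ℤ)) =
      PowerSeries.mk fun n ↦ (#(restricted n fun k ↦ p k ∧ ¬ m ∣ k) : ℤ) := by
    rw [← (hasProd_powerSeriesMk_card_restricted_inter_countRestricted ℤ p hm).tprod_eq,
      powerSeriesMk_card_restricted_eq_tprod, tprod_ite_geom_sum_eq_tprod_ite_tsum ℤ p hm hp]
  simpa using PowerSeries.ext_iff.mp h n

end Nat.Partition

open Nat.Partition in
theorem stmt_5_general (n : ℕ) :
    Nat.card {p : n.Partition // (∀ i, p.parts.count i ≤ 1) ∧ ∀ i ∈ p.parts, ¬ 3 ∣ i} =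
      Nat.card {p : n.Partition // ∀ i ∈ p.parts, i % 6 = 1 ∨ i % 6 = 5} := by
  classical
  calc _ = #(restricted n (¬ 3 ∣ ·) ∩ countRestricted n 2) := by
        rw [Nat.card_eq_fintype_card, Fintype.card_subtype]
        congr 1
        ext p
        simp only [restricted, countRestricted, ← filter_and, mem_filter, mem_univ, true_and]
        grind [Multiset.count_eq_zero]
    _ = #(restricted n fun k ↦ ¬ 3 ∣ k ∧ ¬ 2 ∣ k) :=
        card_restricted_inter_countRestricted_eq_card_restricted n _ two_pos fun k ↦ by omega
    _ = _ := by
        rw [Nat.card_eq_fintype_card, Fintype.card_subtype]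
        congr 1
        ext p
        simp only [restricted, mem_filter, mem_univ, true_and]
        exact forall₂_congr fun i _ ↦ by omega

/-- Schur's theorem: the number of partitions of `n` into distinct parts not divisible by `3`
equals the number of partitions of `n` into parts congruent to `1` or `5` modulo `6`. -/
theorem stmt_5 (n : ℕ) (hn : 0 < n) :
    Nat.card {p : n.Partition // (∀ i, p.parts.count i ≤ 1) ∧ ∀ i ∈ p.parts, ¬ 3 ∣ i} =
      Nat.card {p : n.Partition // ∀ i ∈ p.parts, i % 6 = 1 ∨ i % 6 = 5} :=
  stmt_5_general n
end

section
/- For every positive integer n, the number of partitions of n in which every even part occurs with even multiplicity (odd parts being unrestricted) equals the number of partitions of n in which every odd part occurs at most once (even parts being unrestricted). -/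
/-!
Merging every pair of equal parts `i, i` into one part `2 * i` (so that a part of odd multiplicity
keeps a single copy) and splitting every even part `2 * i` into `i, i` both preserve the sum.
Merging lands among partitions whose odd parts occur at most once, splitting among those whose
even parts have even multiplicity, and on these two classes the operations are mutually inverse.
-/

namespace Multiset

theorem pos_of_mem_of_count_zero {s : Multiset ℕ} (h : s.count 0 = 0) {i : ℕ} (hi : i ∈ s) :
    0 < i :=
  Nat.pos_of_ne_zero (ne_of_mem_of_not_mem hi (count_eq_zero.mp h))

def mergePairs (s : Multiset ℕ) : Multiset ℕ :=
  ∑ i ∈ s.toFinset, (replicate (s.count i % 2) i + replicate (s.count i / 2) (2 * i))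

def splitEvens (s : Multiset ℕ) : Multiset ℕ :=
  s.bind fun i ↦ if Even i then replicate 2 (i / 2) else {i}

section

variable (s : Multiset ℕ) (j : ℕ)

theorem count_mergePairs :
    (mergePairs s).count j = s.count j % 2 + if Even j then s.count (j / 2) / 2 else 0 := by
  simp only [mergePairs, count_sum', count_add, count_replicate, Finset.sum_add_distrib]
  congr 1
  · rw [Finset.sum_ite_eq']
    split_ifs with hj
    · rfl
    · rw [count_eq_zero.mpr (by simpa using hj), Nat.zero_mod]
  · rcases Nat.even_or_odd' j with ⟨k, rfl | rfl⟩
    · simp +contextual [count_eq_zero_of_notMem]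
    · simp only [Nat.not_even_two_mul_add_one, if_false]
      exact Finset.sum_eq_zero fun i _ ↦ if_neg (by omega)

theorem sum_mergePairs : (mergePairs s).sum = s.sum := by
  rw [mergePairs, sum_sum, Finset.sum_multiset_count s]
  refine Finset.sum_congr rfl fun i _ ↦ ?_
  simp only [sum_add, sum_replicate, smul_eq_mul]
  have := Nat.mod_add_div (s.count i) 2
  grind

theorem count_splitEvens :
    (splitEvens s).count j = 2 * s.count (2 * j) + if Odd j then s.count j else 0 := by
  induction s using Multiset.induction_on with
  | empty => simp [splitEvens]
  | cons i s ih =>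
    rw [splitEvens, cons_bind, count_add, ← splitEvens, ih, count_cons, count_cons]
    rcases Nat.even_or_odd i with hi | hi
    · simp only [if_pos hi, count_replicate]
      grind
    · simp only [if_neg (Nat.not_even_iff_odd.mpr hi), count_singleton]
      grind

theorem sum_splitEvens : (splitEvens s).sum = s.sum := by
  conv_rhs => rw [← map_id' s]
  rw [splitEvens, sum_bind]
  congr 1
  refine map_congr rfl fun i _ ↦ ?_
  split_ifs with hi
  · simp only [sum_replicate, smul_eq_mul]
    exact Nat.two_mul_div_two_of_even hi
  · simp

end

section

variable {s : Multiset ℕ}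

theorem splitEvens_mergePairs (h : ∀ k, Even k → Even (s.count k)) :
    s.mergePairs.splitEvens = s := by
  ext j
  have h2j := Nat.even_iff.mp (h (2 * j) (even_two_mul j))
  rcases Nat.even_or_odd' j with ⟨k, rfl | rfl⟩
  · have hk := Nat.even_iff.mp (h (2 * k) (even_two_mul k))
    have h2k : ¬Odd (2 * k) := Nat.not_odd_iff_even.mpr (even_two_mul k)
    simp [count_splitEvens, count_mergePairs, h2k]
    omega
  · simp [count_splitEvens, count_mergePairs]
    omega

theorem mergePairs_splitEvens (h : ∀ k, Odd k → s.count k ≤ 1) :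
    s.splitEvens.mergePairs = s := by
  ext j
  rcases Nat.even_or_odd' j with ⟨k, rfl | rfl⟩
  · have hk : (if Odd k then s.count k else 0) ≤ 1 := by
      split_ifs with hk
      exacts [h k hk, zero_le_one]
    have h2k : ¬Odd (2 * k) := Nat.not_odd_iff_even.mpr (even_two_mul k)
    simp [count_splitEvens, count_mergePairs, h2k]
    omega
  · have hk := h (2 * k + 1) (odd_two_mul_add_one k)
    simp [count_splitEvens, count_mergePairs]
    omega

end

end Multiset

namespace Nat.Partition

variable {n : ℕ}

theorem count_parts_zero (p : n.Partition) : p.parts.count 0 = 0 :=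
  Multiset.count_eq_zero.mpr fun h ↦ (p.parts_pos h).false

def mergePairs (p : n.Partition) : n.Partition where
  parts := p.parts.mergePairs
  parts_pos :=
    Multiset.pos_of_mem_of_count_zero (by simp [Multiset.count_mergePairs, count_parts_zero])
  parts_sum := by rw [Multiset.sum_mergePairs, p.parts_sum]

def splitEvens (p : n.Partition) : n.Partition where
  parts := p.parts.splitEvens
  parts_pos :=
    Multiset.pos_of_mem_of_count_zero (by simp [Multiset.count_splitEvens, count_parts_zero])
  parts_sum := by rw [Multiset.sum_splitEvens, p.parts_sum]

def evenCountEvenEquivOddCountLeOne :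
    {p : n.Partition // ∀ k, Even k → Even (p.parts.count k)} ≃
      {p : n.Partition // ∀ k, Odd k → p.parts.count k ≤ 1} where
  toFun p := ⟨p.1.mergePairs, fun k hk ↦ by
    simp [mergePairs, Multiset.count_mergePairs, Nat.not_even_iff_odd.mpr hk]; omega⟩
  invFun p := ⟨p.1.splitEvens, fun k hk ↦ by
    simp [splitEvens, Multiset.count_splitEvens, Nat.not_odd_iff_even.mpr hk]⟩
  left_inv p := Subtype.ext <| Nat.Partition.ext <| Multiset.splitEvens_mergePairs p.2
  right_inv p := Subtype.ext <| Nat.Partition.ext <| Multiset.mergePairs_splitEvens p.2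

end Nat.Partition

theorem stmt_6_general (n : ℕ) :
    Nat.card {p : n.Partition // ∀ k, Even k → Even (p.parts.count k)} =
      Nat.card {p : n.Partition // ∀ k, Odd k → p.parts.count k ≤ 1} :=
  Nat.card_congr Nat.Partition.evenCountEvenEquivOddCountLeOne

/-- The number of partitions of `n` in which every even part occurs with even multiplicity
(odd parts unrestricted) equals the number of partitions of `n` in which every odd part occurs
at most once (even parts unrestricted). -/
theorem stmt_6 (n : ℕ) (hn : 0 < n) :
    Nat.card {p : n.Partition // ∀ k, Even k → Even (p.parts.count k)} =
      Nat.card {p : n.Partition // ∀ k, Odd k → p.parts.count k ≤ 1} :=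
  stmt_6_general n
end

section
/- For every positive integer n, the number of partitions of n into distinct parts none of which is divisible by 5 equals the number of partitions of n into parts congruent to 1, 3, 7, or 9 modulo 10. -/
/-!
Euler's bijection between partitions into distinct parts and partitions into odd parts: write
each part as `2 ^ a * m` with `m` odd and replace it by `2 ^ a` copies of `m`; conversely, an odd
part `m` of multiplicity `μ` becomes the distinct parts `2 ^ a * m` for the binary digits `a` of
`μ`. Every part keeps its odd part, so any condition on parts that depends only on the odd part,
such as not being divisible by `5`, is preserved, and odd parts not divisible by `5` are exactly
those congruent to `1, 3, 7, 9` modulo `10`.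
-/

open Multiset

theorem Nat.two_pow_mul_eq_iff {a m k : ℕ} (hm : ¬ 2 ∣ m) :
    2 ^ a * m = k ↔ k.factorization 2 = a ∧ ordCompl[2] k = m := by
  constructor
  · rintro rfl
    have hm0 : m ≠ 0 := by rintro rfl; exact hm (dvd_zero 2)
    refine ⟨?_, Nat.ordCompl_pow_mul_of_not_dvd a Nat.prime_two hm⟩
    rw [Nat.factorization_mul (by positivity) hm0, Finsupp.add_apply,
      Nat.prime_two.factorization_pow, Nat.factorization_eq_zero_of_not_dvd hm]
    simp
  · rintro ⟨rfl, rfl⟩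
    exact Nat.ordProj_mul_ordCompl_eq_self k 2

theorem Nat.eq_of_factorization_two_eq_of_ordCompl_two_eq {j k : ℕ}
    (hv : j.factorization 2 = k.factorization 2) (hw : ordCompl[2] j = ordCompl[2] k) : j = k := by
  rw [← Nat.ordProj_mul_ordCompl_eq_self j 2, ← Nat.ordProj_mul_ordCompl_eq_self k 2, hw, hv]

theorem two_pow_mul_iff_of_two_mul_iff {P : ℕ → Prop} (hP : ∀ k, P (2 * k) ↔ P k)
    (a m : ℕ) : P (2 ^ a * m) ↔ P m := by
  induction a with
  | zero => simp
  | succ a ih => rw [pow_succ', mul_assoc, hP, ih]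

theorem ordCompl_two_iff_of_two_mul_iff {P : ℕ → Prop} (hP : ∀ k, P (2 * k) ↔ P k)
    (k : ℕ) : P (ordCompl[2] k) ↔ P k := by
  conv_rhs => rw [← Nat.ordProj_mul_ordCompl_eq_self k 2]
  exact (two_pow_mul_iff_of_two_mul_iff hP _ _).symm

theorem Multiset.mem_of_mem_bitIndices_count {α : Type*} [DecidableEq α] {s : Multiset α}
    {x : α} {a : ℕ} (ha : a ∈ (s.count x).bitIndices) : x ∈ s := by
  by_contra hx
  simp [count_eq_zero.2 hx] at ha

namespace Euler

def oddParts (s : Multiset ℕ) : Multiset ℕ :=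
  s.bind fun k => replicate (2 ^ k.factorization 2) (ordCompl[2] k)

def distinctParts (t : Multiset ℕ) : Multiset ℕ :=
  t.dedup.bind fun m => ((t.count m).bitIndices.map (2 ^ · * m) : Multiset ℕ)

theorem sum_oddParts (s : Multiset ℕ) : (oddParts s).sum = s.sum := by
  simp [oddParts, sum_bind, Nat.ordProj_mul_ordCompl_eq_self]

theorem sum_distinctParts (t : Multiset ℕ) : (distinctParts t).sum = t.sum := by
  rw [distinctParts, sum_bind, Finset.sum_multiset_count t, ← toFinset_val]
  simp [List.sum_map_mul_right, Finset.sum]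

theorem mem_oddParts {s : Multiset ℕ} {i : ℕ} :
    i ∈ oddParts s ↔ ∃ k ∈ s, ordCompl[2] k = i := by
  simp [oddParts, mem_replicate, eq_comm]

theorem mem_distinctParts {t : Multiset ℕ} {j : ℕ} :
    j ∈ distinctParts t ↔ ∃ m ∈ t, ∃ a ∈ (t.count m).bitIndices, 2 ^ a * m = j := by
  simp [distinctParts]

theorem mem_distinctParts_iff_mem_bitIndices {t : Multiset ℕ} (ht : ∀ m ∈ t, ¬ 2 ∣ m)
    {j : ℕ} :
    j ∈ distinctParts t ↔ j.factorization 2 ∈ (t.count (ordCompl[2] j)).bitIndices := by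
  rw [mem_distinctParts]
  constructor
  · rintro ⟨m, hm, a, ha, hj⟩
    obtain ⟨rfl, rfl⟩ := (Nat.two_pow_mul_eq_iff (ht m hm)).1 hj
    exact ha
  · intro hj
    have hmem := mem_of_mem_bitIndices_count hj
    exact ⟨_, hmem, _, hj, (Nat.two_pow_mul_eq_iff (ht _ hmem)).2 ⟨rfl, rfl⟩⟩

theorem nodup_distinctParts {t : Multiset ℕ} (ht : ∀ m ∈ t, ¬ 2 ∣ m) :
    (distinctParts t).Nodup := by
  have hcoord : ∀ m ∈ t.dedup, ∀ a,
      (2 ^ a * m).factorization 2 = a ∧ ordCompl[2] (2 ^ a * m) = m :=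
    fun m hm a => (Nat.two_pow_mul_eq_iff (ht m (mem_dedup.1 hm))).1 rfl
  refine nodup_bind.2 ⟨fun m hm => ?_, (nodup_dedup t).pairwise fun m hm m' hm' hne => ?_⟩
  · refine coe_nodup.2 (Nat.bitIndices_nodup.map fun a b h => ?_)
    rw [← (hcoord m hm a).1, ← (hcoord m hm b).1]
    exact congrArg (·.factorization 2) h
  · refine disjoint_left.2 fun {j} hj hj' => hne ?_
    simp only [mem_coe, List.mem_map] at hj hj'
    obtain ⟨a, -, rfl⟩ := hj
    obtain ⟨a', -, h⟩ := hj'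
    rw [← (hcoord m hm a).2, ← h, (hcoord m' hm' a').2]

theorem count_oddParts {s : Multiset ℕ} (hs : s.Nodup) (m : ℕ) :
    (oddParts s).count m =
      ∑ a ∈ {k ∈ s.toFinset | ordCompl[2] k = m}.image (·.factorization 2), 2 ^ a := by
  rw [Finset.sum_image fun k hk k' hk' hv => by
      simp only [Finset.coe_filter, Set.mem_ofPred_eq] at hk hk'
      exact Nat.eq_of_factorization_two_eq_of_ordCompl_two_eq hv (hk.2.trans hk'.2.symm),
    Finset.sum_filter, oddParts, count_bind, ← hs.dedup, ← toFinset_val]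
  simp [Finset.sum, count_replicate]

theorem distinctParts_oddParts {s : Multiset ℕ} (hs : s.Nodup) (h0 : 0 ∉ s) :
    distinctParts (oddParts s) = s := by
  have hodd : ∀ m ∈ oddParts s, ¬ 2 ∣ m := by
    intro m hm
    obtain ⟨k, hk, rfl⟩ := mem_oddParts.1 hm
    exact Nat.not_dvd_ordCompl Nat.prime_two (ne_of_mem_of_not_mem hk h0)
  refine (nodup_distinctParts hodd).ext hs |>.2 fun j => ?_
  rw [mem_distinctParts_iff_mem_bitIndices hodd, count_oddParts hs, ← List.mem_toFinset,
    Finset.toFinset_bitIndices_sum_two_pow]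
  simp only [Finset.mem_image, Finset.mem_filter, mem_toFinset]
  constructor
  · rintro ⟨k, ⟨hk, hw⟩, hv⟩
    rwa [← Nat.eq_of_factorization_two_eq_of_ordCompl_two_eq hv hw]
  · exact fun hj => ⟨j, ⟨hj, rfl⟩, rfl⟩

theorem oddParts_distinctParts {t : Multiset ℕ} (ht : ∀ m ∈ t, ¬ 2 ∣ m) :
    oddParts (distinctParts t) = t := by
  ext m
  rw [count_oddParts (nodup_distinctParts ht)]
  convert Finset.sum_toFinset_bitIndices_two_pow (t.count m)
  ext a
  simp only [Finset.mem_image, Finset.mem_filter, mem_toFinset, List.mem_toFinset,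
    mem_distinctParts_iff_mem_bitIndices ht]
  constructor
  · rintro ⟨k, ⟨hk, rfl⟩, rfl⟩
    exact hk
  · intro ha
    obtain ⟨hv, hw⟩ := (Nat.two_pow_mul_eq_iff (ht m (mem_of_mem_bitIndices_count ha))).1 rfl
    exact ⟨2 ^ a * m, ⟨by rwa [hw, hv], hw⟩, hv⟩

def distinctEquivOdd {P : ℕ → Prop} (hP : ∀ k, P (2 * k) ↔ P k) (n : ℕ) :
    {p : n.Partition // p.parts.Nodup ∧ ∀ i ∈ p.parts, P i} ≃
      {p : n.Partition // ∀ i ∈ p.parts, ¬ 2 ∣ i ∧ P i} where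
  toFun p :=
    ⟨⟨oddParts p.1.parts,
      fun hi => by
        obtain ⟨k, hk, rfl⟩ := mem_oddParts.1 hi
        exact Nat.ordCompl_pos 2 (p.1.parts_pos hk).ne',
      by rw [sum_oddParts, p.1.parts_sum]⟩,
    fun i hi => by
      obtain ⟨k, hk, rfl⟩ := mem_oddParts.1 hi
      exact ⟨Nat.not_dvd_ordCompl Nat.prime_two (p.1.parts_pos hk).ne',
        (ordCompl_two_iff_of_two_mul_iff hP k).2 (p.2.2 k hk)⟩⟩
  invFun q :=
    ⟨⟨distinctParts q.1.parts,
      fun hj => by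
        obtain ⟨m, hm, a, -, rfl⟩ := mem_distinctParts.1 hj
        exact Nat.mul_pos (by positivity) (q.1.parts_pos hm),
      by rw [sum_distinctParts, q.1.parts_sum]⟩,
    nodup_distinctParts fun m hm => (q.2 m hm).1,
    fun j hj => by
      obtain ⟨m, hm, a, -, rfl⟩ := mem_distinctParts.1 hj
      exact (two_pow_mul_iff_of_two_mul_iff hP a m).2 (q.2 m hm).2⟩
  left_inv p := Subtype.ext <| Nat.Partition.ext <|
    distinctParts_oddParts p.2.1 fun h0 => (p.1.parts_pos h0).false
  right_inv q := Subtype.ext <| Nat.Partition.ext <| oddParts_distinctParts fun m hm => (q.2 m hm).1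

end Euler

theorem stmt_7_general (n : ℕ) :
    Nat.card {p : n.Partition // (∀ i, p.parts.count i ≤ 1) ∧ ∀ i ∈ p.parts, ¬ 5 ∣ i} =
      Nat.card {p : n.Partition //
        ∀ i ∈ p.parts, i % 10 = 1 ∨ i % 10 = 3 ∨ i % 10 = 7 ∨ i % 10 = 9} := by
  have hmod : ∀ i : ℕ,
      (i % 10 = 1 ∨ i % 10 = 3 ∨ i % 10 = 7 ∨ i % 10 = 9) ↔ ¬ 2 ∣ i ∧ ¬ 5 ∣ i := by
    omega
  simp_rw [← nodup_iff_count_le_one, hmod]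
  exact Nat.card_congr (Euler.distinctEquivOdd (P := (¬ 5 ∣ ·)) (by omega) n)

/-- The number of partitions of `n` into distinct parts not divisible by `5` equals the number
of partitions of `n` into parts congruent to `1, 3, 7` or `9` modulo `10`. -/
theorem stmt_7 (n : ℕ) (hn : 0 < n) :
    Nat.card {p : n.Partition // (∀ i, p.parts.count i ≤ 1) ∧ ∀ i ∈ p.parts, ¬ 5 ∣ i} =
      Nat.card {p : n.Partition //
        ∀ i ∈ p.parts, i % 10 = 1 ∨ i % 10 = 3 ∨ i % 10 = 7 ∨ i % 10 = 9} :=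
  stmt_7_general n
end

section
/- Let s ≥ 3 be an odd integer. For every positive integer n, the number of partitions of n into distinct parts none of which is divisible by s equals the number of partitions of n into parts that are odd and congruent to a residue other than s modulo 2s (equivalently, odd parts not divisible by s). -/
/-!
Glaisher's bijection. Write every positive integer as `2 ^ k * a` with `a` odd. A partition
into distinct parts becomes a partition into odd parts by splitting each part `2 ^ k * a` into
`2 ^ k` copies of `a`; conversely `c` copies of an odd `a` are merged into the parts `2 ^ k * a`,
`k` running over the binary digits of `c`, which are distinct by uniqueness of the binary
expansion. The bijection preserves the set of odd parts `a`, and for odd `s` the part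
`2 ^ k * a` is divisible by `s` iff `a` is, so it restricts to partitions avoiding multiples of
`s`.
-/

namespace Glaisher

open Multiset

theorem odd_ordCompl_two {i : ℕ} (hi : i ≠ 0) : Odd (ordCompl[2] i) :=
  Nat.not_even_iff_odd.mp fun h => Nat.not_dvd_ordCompl Nat.prime_two hi h.two_dvd

theorem ordCompl_two_pow_mul {a : ℕ} (ha : Odd a) (k : ℕ) : ordCompl[2] (2 ^ k * a) = a :=
  Nat.ordCompl_pow_mul_of_not_dvd k Nat.prime_two ha.not_two_dvd_nat

theorem factorization_two_pow_mul {a : ℕ} (ha : Odd a) (k : ℕ) :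
    (2 ^ k * a).factorization 2 = k := by
  rw [Nat.factorization_mul (by positivity) ha.pos.ne', Nat.Prime.factorization_pow Nat.prime_two]
  simp [Nat.factorization_eq_zero_of_not_dvd ha.not_two_dvd_nat]

theorem two_pow_mul_inj {k l a b : ℕ} (ha : Odd a) (hb : Odd b) (h : 2 ^ k * a = 2 ^ l * b) :
    k = l ∧ a = b :=
  ⟨by simpa [factorization_two_pow_mul ha, factorization_two_pow_mul hb] using
      congrArg (·.factorization 2) h,
   by simpa [ordCompl_two_pow_mul ha, ordCompl_two_pow_mul hb] using congrArg (ordCompl[2] ·) h⟩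

theorem dvd_ordCompl_iff_of_coprime {s p i : ℕ} (hs : s.Coprime p) :
    s ∣ ordCompl[p] i ↔ s ∣ i :=
  ⟨fun h => h.trans (Nat.ordCompl_dvd i p), fun h =>
    (hs.pow_right _).dvd_of_dvd_mul_left
      (by rwa [Nat.ordProj_mul_ordCompl_eq_self])⟩

def toOddParts (m : Multiset ℕ) : Multiset ℕ :=
  m.bind fun i => replicate (2 ^ i.factorization 2) (ordCompl[2] i)

def toDistinctParts (w : Multiset ℕ) : Multiset ℕ :=
  w.dedup.bind fun a => ((w.count a).bitIndices : Multiset ℕ).map (2 ^ · * a)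

theorem bind_dedup_replicate_count {α : Type*} [DecidableEq α] (w : Multiset α) :
    w.dedup.bind (fun a => replicate (w.count a) a) = w := by
  ext b
  rw [count_bind]
  simp only [count_replicate]
  simpa [← Finset.sum_eq_multiset_sum, ← Multiset.toFinset_val] using
    fun h => (count_eq_zero.mpr h).symm

theorem toOddParts_map_two_pow_mul {a : ℕ} (ha : Odd a) (t : Multiset ℕ) :
    toOddParts (t.map (2 ^ · * a)) = replicate (t.map (2 ^ ·)).sum a := by
  induction t using Multiset.induction_on with
  | empty => simp [toOddParts]
  | cons k t ih =>
    rw [map_cons, toOddParts, cons_bind, ← toOddParts, ih, map_cons, sum_cons, replicate_add,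
      ordCompl_two_pow_mul ha, factorization_two_pow_mul ha]

theorem toOddParts_toDistinctParts {w : Multiset ℕ} (hw : ∀ a ∈ w, Odd a) :
    toOddParts (toDistinctParts w) = w := by
  rw [toDistinctParts, toOddParts, bind_assoc]
  conv_rhs => rw [← bind_dedup_replicate_count w]
  refine bind_congr fun a ha => ?_
  rw [← toOddParts, toOddParts_map_two_pow_mul (hw a (mem_dedup.mp ha)), map_coe, sum_coe,
    Nat.sum_map_two_pow_bitIndices]

theorem sum_toOddParts (m : Multiset ℕ) : (toOddParts m).sum = m.sum := by
  rw [toOddParts, sum_bind]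
  congr 1
  refine (map_congr rfl fun i _ => ?_).trans (map_id' m)
  rw [sum_replicate, smul_eq_mul, Nat.ordProj_mul_ordCompl_eq_self]

theorem sum_toDistinctParts (w : Multiset ℕ) : (toDistinctParts w).sum = w.sum := by
  conv_rhs => rw [← bind_dedup_replicate_count w]
  rw [toDistinctParts, sum_bind, sum_bind]
  refine congrArg sum (map_congr rfl fun a _ => ?_)
  rw [map_coe, sum_coe, sum_replicate, smul_eq_mul, List.sum_map_mul_right,
    Nat.sum_map_two_pow_bitIndices]

theorem forall_mem_toOddParts {m : Multiset ℕ} {P : ℕ → Prop} :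
    (∀ a ∈ toOddParts m, P a) ↔ ∀ i ∈ m, P (ordCompl[2] i) := by
  constructor
  · exact fun h i hi => h _ (mem_bind.mpr ⟨i, hi, mem_replicate.mpr ⟨by positivity, rfl⟩⟩)
  · intro h a ha
    obtain ⟨i, hi, ha⟩ := mem_bind.mp ha
    exact eq_of_mem_replicate ha ▸ h i hi

theorem odd_of_mem_toOddParts {m : Multiset ℕ} (h0 : 0 ∉ m) : ∀ a ∈ toOddParts m, Odd a :=
  forall_mem_toOddParts.mpr fun _ hi => odd_ordCompl_two (ne_of_mem_of_not_mem hi h0)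

theorem exists_two_pow_mul_of_mem_toDistinctParts {w : Multiset ℕ} {j : ℕ}
    (hj : j ∈ toDistinctParts w) : ∃ a ∈ w, ∃ k, 2 ^ k * a = j := by
  obtain ⟨a, ha, hj⟩ := mem_bind.mp hj
  obtain ⟨k, -, rfl⟩ := mem_map.mp hj
  exact ⟨a, mem_dedup.mp ha, k, rfl⟩

theorem two_pow_mul_mem_toDistinctParts {w : Multiset ℕ} (hw : ∀ b ∈ w, Odd b) {a : ℕ}
    (ha : Odd a) (k : ℕ) : 2 ^ k * a ∈ toDistinctParts w ↔ k ∈ (w.count a).bitIndices := by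
  simp only [toDistinctParts, mem_bind, mem_map, mem_coe, mem_dedup]
  constructor
  · rintro ⟨b, hb, l, hl, hlk⟩
    obtain ⟨rfl, rfl⟩ := two_pow_mul_inj (hw b hb) ha hlk
    exact hl
  · intro hk
    refine ⟨a, ?_, k, hk, rfl⟩
    by_contra h
    simp [count_eq_zero.mpr h] at hk

theorem nodup_toDistinctParts {w : Multiset ℕ} (hw : ∀ b ∈ w, Odd b) :
    (toDistinctParts w).Nodup := by
  refine nodup_bind.mpr
    ⟨fun a ha => ?_, Nodup.pairwise (fun a ha b hb hab => ?_) (nodup_dedup w)⟩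
  · refine (coe_nodup.mpr Nat.bitIndices_sorted.nodup).map fun k l h => ?_
    exact (two_pow_mul_inj (hw a (mem_dedup.mp ha)) (hw a (mem_dedup.mp ha)) h).1
  · refine disjoint_left.mpr fun hj hj' => ?_
    obtain ⟨k, -, rfl⟩ := mem_map.mp hj
    obtain ⟨l, -, h⟩ := mem_map.mp hj'
    exact hab (two_pow_mul_inj (hw b (mem_dedup.mp hb)) (hw a (mem_dedup.mp ha)) h).2.symm

theorem count_toOddParts (m : Multiset ℕ) (a : ℕ) :
    (toOddParts m).count a =
      (m.map fun i => if ordCompl[2] i = a then 2 ^ i.factorization 2 else 0).sum := by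
  simp only [toOddParts, count_bind, count_replicate]

theorem eq_of_ordCompl_eq_of_factorization_eq {p i j : ℕ}
    (hu : ordCompl[p] i = ordCompl[p] j) (hv : i.factorization p = j.factorization p) : i = j := by
  rw [← Nat.ordProj_mul_ordCompl_eq_self i p, ← Nat.ordProj_mul_ordCompl_eq_self j p, hu, hv]

theorem count_toOddParts_of_nodup {m : Multiset ℕ} (hm : m.Nodup) (a : ℕ) :
    (toOddParts m).count a =
      ∑ k ∈ {i ∈ m.toFinset | ordCompl[2] i = a}.image (·.factorization 2), 2 ^ k := by
  rw [Finset.sum_image fun i hi j hj hij => eq_of_ordCompl_eq_of_factorization_eq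
    ((Finset.mem_filter.mp hi).2.trans (Finset.mem_filter.mp hj).2.symm) hij, Finset.sum_filter,
    count_toOddParts, Finset.sum_eq_multiset_sum, toFinset_val, hm.dedup]

theorem toDistinctParts_toOddParts {m : Multiset ℕ} (hm : m.Nodup) (h0 : 0 ∉ m) :
    toDistinctParts (toOddParts m) = m := by
  have hw := odd_of_mem_toOddParts h0
  refine ((nodup_toDistinctParts hw).ext hm).mpr fun j => ?_
  rcases eq_or_ne j 0 with rfl | hj
  · refine iff_of_false (fun h => ?_) h0
    obtain ⟨a, ha, k, hk⟩ := exists_two_pow_mul_of_mem_toDistinctParts h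
    exact (Nat.mul_ne_zero (by positivity) (hw a ha).pos.ne') hk
  · conv_lhs => rw [← Nat.ordProj_mul_ordCompl_eq_self j 2]
    rw [two_pow_mul_mem_toDistinctParts hw (odd_ordCompl_two hj), count_toOddParts_of_nodup hm,
      ← List.mem_toFinset, Finset.toFinset_bitIndices_sum_two_pow]
    simp only [Finset.mem_image, Finset.mem_filter, mem_toFinset]
    refine ⟨fun ⟨i, ⟨hi, hu⟩, hv⟩ => ?_, fun hjm => ⟨j, ⟨hjm, rfl⟩, rfl⟩⟩
    rwa [← eq_of_ordCompl_eq_of_factorization_eq hu hv]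

def distinctEquivOdd (n : ℕ) :
    {p : n.Partition // p.parts.Nodup} ≃ {p : n.Partition // ∀ i ∈ p.parts, Odd i} where
  toFun p :=
    have h0 : 0 ∉ p.1.parts := fun h => (p.1.parts_pos h).ne' rfl
    ⟨⟨toOddParts p.1.parts, fun hi => (odd_of_mem_toOddParts h0 _ hi).pos,
      by rw [sum_toOddParts, p.1.parts_sum]⟩, odd_of_mem_toOddParts h0⟩
  invFun q :=
    ⟨⟨toDistinctParts q.1.parts, fun hj => by
        obtain ⟨a, ha, k, rfl⟩ := exists_two_pow_mul_of_mem_toDistinctParts hj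
        exact Nat.mul_pos (by positivity) (q.1.parts_pos ha),
      by rw [sum_toDistinctParts, q.1.parts_sum]⟩, nodup_toDistinctParts q.2⟩
  left_inv p := Subtype.ext <| Nat.Partition.ext <|
    toDistinctParts_toOddParts p.2 fun h => (p.1.parts_pos h).ne' rfl
  right_inv q := Subtype.ext <| Nat.Partition.ext <| toOddParts_toDistinctParts q.2

theorem card_distinct_eq_card_odd (P : ℕ → Prop) (n : ℕ) :
    Nat.card {p : n.Partition // p.parts.Nodup ∧ ∀ i ∈ p.parts, P (ordCompl[2] i)} =
      Nat.card {p : n.Partition // ∀ i ∈ p.parts, Odd i ∧ P i} := by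
  calc _ = Nat.card {p : {p : n.Partition // p.parts.Nodup} //
          ∀ i ∈ p.1.parts, P (ordCompl[2] i)} :=
        (Nat.card_congr (Equiv.subtypeSubtypeEquivSubtypeInter _ _)).symm
    _ = Nat.card {q : {q : n.Partition // ∀ i ∈ q.parts, Odd i} // ∀ i ∈ q.1.parts, P i} :=
        Nat.card_congr ((distinctEquivOdd n).subtypeEquiv fun _ => forall_mem_toOddParts.symm)
    _ = Nat.card {q : n.Partition // (∀ i ∈ q.parts, Odd i) ∧ ∀ i ∈ q.parts, P i} :=
        Nat.card_congr <| Equiv.subtypeSubtypeEquivSubtypeInter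
          (fun q : n.Partition => ∀ i ∈ q.parts, Odd i) fun q => ∀ i ∈ q.parts, P i
    _ = _ := by simp only [forall₂_and]

end Glaisher

theorem stmt_8_general (s : ℕ) (hodd : Odd s) (n : ℕ) :
    Nat.card {p : n.Partition // (∀ i, p.parts.count i ≤ 1) ∧ ∀ i ∈ p.parts, ¬ s ∣ i} =
      Nat.card {p : n.Partition // ∀ i ∈ p.parts, Odd i ∧ ¬ s ∣ i} := by
  have hs : s.Coprime 2 := Nat.coprime_two_right.mpr hodd
  simpa [Glaisher.dvd_ordCompl_iff_of_coprime hs, Multiset.nodup_iff_count_le_one] using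
    Glaisher.card_distinct_eq_card_odd (¬ s ∣ ·) n

/-- For odd `s ≥ 3`, the number of partitions of `n` into distinct parts not divisible by `s`
equals the number of partitions of `n` into odd parts not divisible by `s` (equivalently, odd
parts congruent to a residue other than `s` modulo `2s`). -/
theorem stmt_8 (s : ℕ) (hs : 3 ≤ s) (hodd : Odd s) (n : ℕ) (hn : 0 < n) :
    Nat.card {p : n.Partition // (∀ i, p.parts.count i ≤ 1) ∧ ∀ i ∈ p.parts, ¬ s ∣ i} =
      Nat.card {p : n.Partition // ∀ i ∈ p.parts, Odd i ∧ ¬ s ∣ i} :=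
  stmt_8_general s hodd n
end

section
/- For every real number x with |x| < 1, (∑_{n ∈ ℤ} (−1)^n x^(n²)) · ∏_{k=1}^∞ (1 + x^k)/(1 − x^k) = 1; that is, the infinite product ∏_{k=1}^∞ (1 + x^k)/(1 − x^k) equals the reciprocal of the Jacobi theta function θ₄(0,x) = ∑_{n ∈ ℤ} (−1)^n x^(n²). -/
/-!
Put `q = x²` and `(q; q)ₙ = ∏_{i<n} (1 - q^(i+1))`. The finite `q`-binomial theorem for
`∏_{i<2m} (1 + w qⁱ)` at `w = -x^(1-2m)` gives the finite form of Gauss's identity,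
`∑_{|n| ≤ m} (-1)ⁿ [2m, m+n]_q x^(n²) = ∏_{k<m} (1 - x^(2k+1))²`.
As `m → ∞` the Gaussian binomial `[2m, m+n]_q = (q; q)_{2m} / ((q; q)_{m+n} (q; q)_{m-n})` tends
to `1 / (q; q)_∞` and is bounded by `(q; q)_∞⁻²`, so dominated convergence gives
`θ₄(x) = (x; x²)_∞² (x²; x²)_∞`. Splitting `(x; x)_∞` into odd and even factors and using
`(1 + xᵏ)(1 - xᵏ) = 1 - x^(2k)` identifies `∏ (1 + xᵏ)/(1 - xᵏ)` with the reciprocal of this product.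
-/

open Finset Filter Topology

namespace GaussTheta

section CommRing

variable {R : Type*} [CommRing R] (q : R)

def qPochhammer (n : ℕ) : R := ∏ i ∈ range n, (1 - q ^ (i + 1))

def gaussBinom : ℕ → ℕ → R
  | _, 0 => 1
  | 0, _ + 1 => 0
  | n + 1, r + 1 => q ^ (r + 1) * gaussBinom n (r + 1) + gaussBinom n r

@[simp] lemma gaussBinom_zero_right (n : ℕ) : gaussBinom q n 0 = 1 := by
  cases n <;> rfl

lemma gaussBinom_succ_succ (n r : ℕ) :
    gaussBinom q (n + 1) (r + 1) = q ^ (r + 1) * gaussBinom q n (r + 1) + gaussBinom q n r :=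
  rfl

lemma gaussBinom_eq_zero_of_lt : ∀ {n r : ℕ}, n < r → gaussBinom q n r = 0
  | 0, _ + 1, _ => rfl
  | n + 1, r + 1, h => by
    rw [gaussBinom_succ_succ, gaussBinom_eq_zero_of_lt (by omega),
      gaussBinom_eq_zero_of_lt (by omega), mul_zero, add_zero]

lemma gaussBinom_self : ∀ n : ℕ, gaussBinom q n n = 1
  | 0 => rfl
  | n + 1 => by
    rw [gaussBinom_succ_succ, gaussBinom_eq_zero_of_lt q (Nat.lt_succ_self n), gaussBinom_self n,
      mul_zero, zero_add]

lemma qPochhammer_succ (n : ℕ) : qPochhammer q (n + 1) = qPochhammer q n * (1 - q ^ (n + 1)) :=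
  prod_range_succ _ _

lemma gaussBinom_add_mul_qPochhammer_mul_qPochhammer (a b : ℕ) :
    gaussBinom q (a + b) a * qPochhammer q a * qPochhammer q b = qPochhammer q (a + b) := by
  induction a generalizing b with
  | zero => simp [qPochhammer]
  | succ a iha =>
    induction b with
    | zero => simp [gaussBinom_self, qPochhammer]
    | succ b ihb =>
      have ha : gaussBinom q (a + b + 1) (a + 1) * qPochhammer q (a + 1) * qPochhammer q b =
          qPochhammer q (a + b + 1) := by rwa [add_right_comm] at ihb
      have hb : gaussBinom q (a + b + 1) a * qPochhammer q a * qPochhammer q (b + 1) =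
          qPochhammer q (a + b + 1) := iha (b + 1)
      rw [qPochhammer_succ q a] at ha
      rw [qPochhammer_succ q b] at hb
      rw [show a + 1 + (b + 1) = a + b + 1 + 1 by ring, gaussBinom_succ_succ,
        qPochhammer_succ q (a + b + 1), qPochhammer_succ q a, qPochhammer_succ q b]
      linear_combination (q ^ (a + 1) * (1 - q ^ (b + 1))) * ha + (1 - q ^ (a + 1)) * hb

theorem prod_one_add_mul_pow_eq_sum (w : R) (n : ℕ) :
    ∏ i ∈ range n, (1 + w * q ^ i) =
      ∑ r ∈ range (n + 1), gaussBinom q n r * q ^ r.choose 2 * w ^ r := by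
  induction n generalizing w with
  | zero => simp
  | succ n ih =>
    set t : ℕ → R := fun r => gaussBinom q n r * q ^ (r + 1).choose 2 * w ^ r with ht
    have hshift : ∑ r ∈ range (n + 1), t (r + 1) = ∑ r ∈ range (n + 1), t r - 1 := by
      have h0 : t 0 = 1 := by simp [ht]
      have hlast : t (n + 1) = 0 := by simp [ht, gaussBinom_eq_zero_of_lt q (Nat.lt_succ_self n)]
      have h := sum_range_succ' t (n + 1)
      rw [sum_range_succ, h0, hlast] at h
      linear_combination -h
    calc ∏ i ∈ range (n + 1), (1 + w * q ^ i)
        = (1 + w) * ∏ i ∈ range n, (1 + (w * q) * q ^ i) := by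
          rw [prod_range_succ']; simp only [pow_succ, pow_zero, mul_one]; ring_nf
      _ = (1 + w) * ∑ r ∈ range (n + 1), t r := by
          rw [ih]; congr 1; refine sum_congr rfl fun r _ => ?_
          simp only [ht]
          rw [Nat.choose_succ_succ', Nat.choose_one_right, pow_add, mul_pow]; ring
      _ = 1 + ∑ r ∈ range (n + 1), (t (r + 1) + w * t r) := by
          rw [sum_add_distrib, hshift, ← mul_sum]; ring
      _ = _ := by
          rw [sum_range_succ' _ (n + 1), gaussBinom_zero_right, add_comm]
          simp only [ht, gaussBinom_succ_succ, Nat.choose_succ_succ' (_ + 1), Nat.choose_one_right]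
          simp only [Nat.choose_zero_succ, pow_zero, mul_one, add_left_inj]
          refine sum_congr rfl fun r _ => ?_
          ring

end CommRing

lemma sum_range_two_mul_add_one (m : ℕ) : ∑ i ∈ range m, (2 * i + 1) = m ^ 2 := by
  induction m with
  | zero => simp
  | succ m ih => rw [sum_range_succ, ih]; ring

lemma two_mul_choose_two_add_self (r : ℕ) : 2 * r.choose 2 + r = r ^ 2 := by
  induction r with
  | zero => simp
  | succ r ih => rw [Nat.choose_succ_succ', Nat.choose_one_right]; linear_combination ih

section Field

variable {F : Type*} [Field F] {x : F}

lemma gaussBinom_add_eq_div {q : F} (a b : ℕ) (ha : qPochhammer q a ≠ 0)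
    (hb : qPochhammer q b ≠ 0) :
    gaussBinom q (a + b) a = qPochhammer q (a + b) / (qPochhammer q a * qPochhammer q b) := by
  rw [← gaussBinom_add_mul_qPochhammer_mul_qPochhammer]
  field_simp

lemma prod_range_two_mul_one_add_zpow (hx : x ≠ 0) (m : ℕ) :
    ∏ i ∈ range (2 * m), (1 + -x ^ (1 - 2 * m : ℤ) * (x ^ 2) ^ i) =
      (-1) ^ m * (x ^ (m ^ 2))⁻¹ * (∏ k ∈ range m, (1 - x ^ (2 * k + 1))) ^ 2 := by
  have hfactor (i : ℕ) : 1 + -x ^ (1 - 2 * m : ℤ) * (x ^ 2) ^ i =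
      1 - x ^ (2 * i + 1 - 2 * m : ℤ) := by
    rw [← pow_mul, ← zpow_natCast, neg_mul, ← zpow_add₀ hx]; push_cast; ring_nf
  have hlow (j : ℕ) (hj : j < m) : 1 + -x ^ (1 - 2 * m : ℤ) * (x ^ 2) ^ (m - 1 - j) =
      -(x ^ (2 * j + 1))⁻¹ * (1 - x ^ (2 * j + 1)) := by
    have hexp : (2 * (m - 1 - j : ℕ) + 1 - 2 * m : ℤ) = -((2 * j + 1 : ℕ) : ℤ) := by omega
    rw [hfactor, hexp, zpow_neg, zpow_natCast]
    field_simp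
    ring
  have hhigh (i : ℕ) : 1 + -x ^ (1 - 2 * m : ℤ) * (x ^ 2) ^ (m + i) = 1 - x ^ (2 * i + 1) := by
    rw [hfactor, ← zpow_natCast]; push_cast; ring_nf
  rw [two_mul, prod_range_add, ← prod_range_reflect, prod_congr rfl fun j hj => hlow j
    (mem_range.1 hj), prod_congr rfl fun i _ => hhigh i, prod_mul_distrib, prod_neg,
    prod_inv_distrib, prod_pow_eq_pow_sum, sum_range_two_mul_add_one, card_range]
  ring

lemma pow_choose_two_mul_neg_zpow_pow (hx : x ≠ 0) (m r : ℕ) :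
    (x ^ 2) ^ r.choose 2 * (-x ^ (1 - 2 * m : ℤ)) ^ r =
      (-1) ^ m * (x ^ (m ^ 2))⁻¹ * ((-1) ^ ((r : ℤ) - m) * x ^ ((r : ℤ) - m).natAbs ^ 2) := by
  have hsign : (-1 : F) ^ ((r : ℤ) - m) = (-1) ^ m * (-1) ^ r := by
    rw [zpow_sub₀ (by norm_num), zpow_natCast, zpow_natCast, div_eq_mul_inv, ← inv_pow, inv_neg,
      inv_one, mul_comm]
  have hexp : ((((r : ℤ) - m).natAbs ^ 2 : ℕ) : ℤ) =
      ((2 * r.choose 2 : ℕ) : ℤ) + (1 - 2 * m) * r + ((m ^ 2 : ℕ) : ℤ) := by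
    have := congrArg (fun n : ℕ => (n : ℤ)) (two_mul_choose_two_add_self r)
    push_cast [sq_abs] at this ⊢
    linear_combination -this
  have hm : ((-1 : F) ^ m) ^ 2 = 1 := by rw [← pow_mul, mul_comm, pow_mul]; norm_num
  rw [hsign, neg_pow, ← pow_mul, ← zpow_natCast x (2 * _), ← zpow_natCast (x ^ _) r, ← zpow_mul,
    ← zpow_natCast x (((r : ℤ) - m).natAbs ^ 2), hexp, zpow_add₀ hx, zpow_add₀ hx, zpow_natCast,
    zpow_natCast]
  field_simp
  exact hm.symm

theorem sum_Icc_neg_one_zpow_mul_pow_sq_mul_gaussBinom (x : F) (m : ℕ) :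
    ∑ n ∈ Icc (-m : ℤ) m, (-1) ^ n * x ^ n.natAbs ^ 2 * gaussBinom (x ^ 2) (2 * m) (m + n).toNat =
      (∏ k ∈ range m, (1 - x ^ (2 * k + 1))) ^ 2 := by
  rcases eq_or_ne x 0 with rfl | hx
  · have hcentral : gaussBinom (0 : F) (2 * m) m = 1 := by
      simpa [qPochhammer, two_mul] using gaussBinom_add_mul_qPochhammer_mul_qPochhammer (0 : F) m m
    rw [sum_eq_single 0 (fun n _ hn => by simp [Int.natAbs_ne_zero.2 hn]) (by simp)]
    simp [hcentral]
  have h := prod_one_add_mul_pow_eq_sum (x ^ 2) (-x ^ (1 - 2 * m : ℤ)) (2 * m)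
  rw [prod_range_two_mul_one_add_zpow hx, sum_congr rfl fun r _ => by
    rw [mul_assoc, pow_choose_two_mul_neg_zpow_pow hx, mul_comm, mul_assoc], ← mul_sum] at h
  refine Eq.trans ?_ (mul_left_cancel₀ (by simp [hx]) h).symm
  refine sum_nbij' (fun n => (m + n).toNat) (fun r => r - m) ?_ ?_ ?_ ?_ ?_ <;>
    intro a ha <;> simp only [mem_Icc, mem_range] at ha
  · simp only [mem_range]; omega
  · simp only [mem_Icc]; omega
  · omega
  · omega
  · rw [Int.toNat_of_nonneg (by omega), add_sub_cancel_left]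

end Field

section Real

lemma pow_lt_one_of_abs_lt_one {x : ℝ} (hx : |x| < 1) {n : ℕ} (hn : n ≠ 0) : x ^ n < 1 :=
  (le_abs_self _).trans_lt (by rw [abs_pow]; exact pow_lt_one₀ (abs_nonneg x) hx hn)

lemma summable_pow_comp_of_injective {x : ℝ} (hx : |x| < 1) {g : ℕ → ℕ} (hg : g.Injective) :
    Summable fun k => x ^ g k :=
  (summable_geometric_of_abs_lt_one hx).comp_injective hg

lemma multipliable_one_sub_of_summable {ι : Type*} {f : ι → ℝ} (hf : Summable f) :
    Multipliable fun i => 1 - f i := by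
  simpa only [sub_eq_add_neg] using Real.multipliable_one_add_of_summable hf.neg

lemma tprod_one_sub_pos {ι : Type*} {f : ι → ℝ} (hf : Summable f) (hlt : ∀ i, f i < 1) :
    0 < ∏' i, (1 - f i) := by
  have hlog : Summable fun i => Real.log (1 - f i) := by
    simpa only [sub_eq_add_neg] using Real.summable_log_one_add_of_summable hf.neg
  rw [← Real.rexp_tsum_eq_tprod (fun i => sub_pos.2 (hlt i)) hlog]
  exact Real.exp_pos _

variable {q : ℝ}

lemma qPochhammer_pos (hq0 : 0 ≤ q) (hq1 : q < 1) (n : ℕ) : 0 < qPochhammer q n :=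
  prod_pos fun i _ => sub_pos.2 (pow_lt_one₀ hq0 hq1 i.succ_ne_zero)

lemma qPochhammer_le_one (hq0 : 0 ≤ q) (hq1 : q < 1) (n : ℕ) : qPochhammer q n ≤ 1 :=
  prod_le_one (fun i _ => (sub_pos.2 (pow_lt_one₀ hq0 hq1 i.succ_ne_zero)).le)
    fun _ _ => sub_le_self _ (pow_nonneg hq0 _)

lemma antitone_qPochhammer (hq0 : 0 ≤ q) (hq1 : q < 1) : Antitone (qPochhammer q) :=
  antitone_nat_of_succ_le fun n => by
    rw [qPochhammer_succ]
    exact mul_le_of_le_one_right (qPochhammer_pos hq0 hq1 n).le (sub_le_self _ (pow_nonneg hq0 _))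

lemma tendsto_qPochhammer (hq : |q| < 1) :
    Tendsto (qPochhammer q) atTop (𝓝 (∏' k, (1 - q ^ (k + 1)))) :=
  (multipliable_one_sub_of_summable
    (summable_pow_comp_of_injective hq (add_left_injective 1))).tendsto_prod_tprod_nat

lemma tprod_one_sub_pow_succ_pos (hq : |q| < 1) : 0 < ∏' k, (1 - q ^ (k + 1)) :=
  tprod_one_sub_pos (summable_pow_comp_of_injective hq (add_left_injective 1))
    fun k => pow_lt_one_of_abs_lt_one hq k.succ_ne_zero

lemma abs_gaussBinom_le (hq0 : 0 ≤ q) (hq1 : q < 1) (n r : ℕ) :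
    |gaussBinom q n r| ≤ (∏' k, (1 - q ^ (k + 1)))⁻¹ ^ 2 := by
  have hq : |q| < 1 := by rwa [abs_of_nonneg hq0]
  set E := ∏' k, (1 - q ^ (k + 1))
  have hE := tprod_one_sub_pow_succ_pos hq
  have hEle (k : ℕ) : E ≤ qPochhammer q k :=
    (antitone_qPochhammer hq0 hq1).le_of_tendsto (tendsto_qPochhammer hq) k
  rcases lt_or_ge n r with hnr | hrn
  · rw [gaussBinom_eq_zero_of_lt q hnr, abs_zero]; positivity
  obtain ⟨b, rfl⟩ := Nat.exists_eq_add_of_le hrn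
  have hr := qPochhammer_pos hq0 hq1 r
  have hb := qPochhammer_pos hq0 hq1 b
  rw [gaussBinom_add_eq_div r b hr.ne' hb.ne', abs_of_nonneg
    (div_nonneg (qPochhammer_pos hq0 hq1 _).le (by positivity)), inv_pow, ← one_div, sq]
  exact div_le_div₀ zero_le_one (qPochhammer_le_one hq0 hq1 _) (by positivity)
    (mul_le_mul (hEle r) (hEle b) hE.le hr.le)

lemma tendsto_gaussBinom_two_mul (hq0 : 0 ≤ q) (hq1 : q < 1) (n : ℤ) :
    Tendsto (fun m : ℕ => gaussBinom q (2 * m) (m + n).toNat) atTop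
      (𝓝 (∏' k, (1 - q ^ (k + 1)))⁻¹) := by
  have hq : |q| < 1 := by rwa [abs_of_nonneg hq0]
  set E := ∏' k, (1 - q ^ (k + 1))
  have hE := tprod_one_sub_pow_succ_pos hq
  have hlim {f : ℕ → ℕ} (hf : Tendsto f atTop atTop) :
      Tendsto (fun m => qPochhammer q (f m)) atTop (𝓝 E) := (tendsto_qPochhammer hq).comp hf
  have hshift (s : ℤ) : Tendsto (fun m : ℕ => (m + s).toNat) atTop atTop :=
    tendsto_atTop_atTop.2 fun b => ⟨b + s.natAbs, fun m hm => by omega⟩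
  have hquot := (hlim (tendsto_id.const_mul_atTop' two_pos)).div
    ((hlim (hshift n)).mul (hlim (hshift (-n)))) (by positivity)
  rw [div_mul_cancel_left₀ hE.ne'] at hquot
  refine hquot.congr' ?_
  filter_upwards [eventually_ge_atTop n.natAbs] with m hm
  have hsplit : 2 * m = (m + n).toNat + (m + -n).toNat := by omega
  simp only [Pi.div_apply, id]
  rw [hsplit, gaussBinom_add_eq_div _ _ (qPochhammer_pos hq0 hq1 _).ne'
    (qPochhammer_pos hq0 hq1 _).ne']

lemma summable_abs_pow_natAbs_sq {x : ℝ} (hx : |x| < 1) :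
    Summable fun n : ℤ => |x| ^ n.natAbs ^ 2 := by
  have hnat := summable_pow_comp_of_injective (x := |x|) (by rwa [abs_abs])
    (Nat.pow_left_injective two_ne_zero)
  exact .of_nat_of_neg (by simpa using hnat) (by simpa using hnat)

theorem tsum_neg_one_zpow_mul_pow_natAbs_sq {x : ℝ} (hx : |x| < 1) :
    ∑' n : ℤ, (-1) ^ n * x ^ n.natAbs ^ 2 =
      (∏' k, (1 - x ^ (2 * k + 1))) ^ 2 * ∏' k, (1 - (x ^ 2) ^ (k + 1)) := by
  have hq1 : x ^ 2 < 1 := (sq_lt_one_iff_abs_lt_one x).2 hx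
  have hq : |x ^ 2| < 1 := by rwa [abs_of_nonneg (sq_nonneg x)]
  set E := ∏' k, (1 - (x ^ 2) ^ (k + 1))
  have hE : 0 < E := tprod_one_sub_pow_succ_pos hq
  set θ : ℤ → ℝ := fun n => (-1) ^ n * x ^ n.natAbs ^ 2
  set T : ℕ → ℤ → ℝ := fun m => (Icc (-m : ℤ) m : Set ℤ).indicator
    fun n => θ n * gaussBinom (x ^ 2) (2 * m) (m + n).toNat
  have hT (m : ℕ) : ∑' n, T m n = (∏ k ∈ range m, (1 - x ^ (2 * k + 1))) ^ 2 := by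
    rw [← sum_eq_tsum_indicator, sum_Icc_neg_one_zpow_mul_pow_sq_mul_gaussBinom]
  have hpointwise (n : ℤ) : Tendsto (T · n) atTop (𝓝 (θ n * E⁻¹)) := by
    refine (tendsto_gaussBinom_two_mul (sq_nonneg x) hq1 n).const_mul (θ n) |>.congr' ?_
    filter_upwards [eventually_ge_atTop n.natAbs] with m hm
    have hmem : n ∈ (Icc (-m : ℤ) m : Set ℤ) := by rw [mem_coe, mem_Icc]; omega
    simp only [T, Set.indicator_of_mem hmem]
  have hbound (m : ℕ) (n : ℤ) : ‖T m n‖ ≤ |x| ^ n.natAbs ^ 2 * E⁻¹ ^ 2 := by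
    refine (norm_indicator_le_norm_self _ _).trans ?_
    rw [Real.norm_eq_abs, abs_mul, abs_mul, abs_neg_one_zpow, one_mul, abs_pow]
    exact mul_le_mul_of_nonneg_left (abs_gaussBinom_le (sq_nonneg x) hq1 _ _) (by positivity)
  have hlim := tendsto_tsum_of_dominated_convergence
    ((summable_abs_pow_natAbs_sq hx).mul_right _) hpointwise (.of_forall hbound)
  have hodd : Summable fun k => x ^ (2 * k + 1) :=
    summable_pow_comp_of_injective hx fun a b h => by omega
  have hO := (multipliable_one_sub_of_summable hodd).tendsto_prod_tprod_nat.pow 2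
  have heq := tendsto_nhds_unique (hlim.congr hT) hO
  rw [tsum_mul_right] at heq
  rw [← heq, inv_mul_cancel_right₀ hE.ne']

theorem tprod_one_add_div_one_sub_mul_eq_one {x : ℝ} (hx : |x| < 1) :
    (∏' k, (1 + x ^ (k + 1)) / (1 - x ^ (k + 1))) *
      ((∏' k, (1 - x ^ (2 * k + 1))) ^ 2 * ∏' k, (1 - (x ^ 2) ^ (k + 1))) = 1 := by
  have hsucc : Summable fun k => x ^ (k + 1) :=
    summable_pow_comp_of_injective hx (add_left_injective 1)
  have hodd : Summable fun k => x ^ (2 * k + 1) :=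
    summable_pow_comp_of_injective hx fun a b h => by omega
  have heven : Summable fun k => x ^ (2 * k + 1 + 1) :=
    summable_pow_comp_of_injective hx fun a b h => by omega
  have hq : |x ^ 2| < 1 := by rwa [abs_of_nonneg (sq_nonneg x), sq_lt_one_iff_abs_lt_one]
  have hO : 0 < ∏' k, (1 - x ^ (2 * k + 1)) :=
    tprod_one_sub_pos hodd fun k => pow_lt_one_of_abs_lt_one hx (by omega)
  have hE : 0 < ∏' k, (1 - (x ^ 2) ^ (k + 1)) := tprod_one_sub_pow_succ_pos hq
  have hsquare (k : ℕ) : 1 - (x ^ 2) ^ (k + 1) = 1 - x ^ (2 * k + 1 + 1) := by ring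
  have hsplit : ∏' k, (1 - x ^ (k + 1)) =
      (∏' k, (1 - x ^ (2 * k + 1))) * ∏' k, (1 - (x ^ 2) ^ (k + 1)) := by
    rw [tprod_congr hsquare]
    exact (tprod_even_mul_odd (f := fun k => 1 - x ^ (k + 1))
      (multipliable_one_sub_of_summable hodd) (multipliable_one_sub_of_summable heven)).symm
  have hpm : (∏' k, (1 + x ^ (k + 1))) * ∏' k, (1 - x ^ (k + 1)) =
      ∏' k, (1 - (x ^ 2) ^ (k + 1)) := by
    rw [← (Real.multipliable_one_add_of_summable hsucc).tprod_mul
      (multipliable_one_sub_of_summable hsucc)]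
    exact tprod_congr fun k => by ring
  rw [(Real.multipliable_one_add_of_summable hsucc).tprod_div₀
    (multipliable_one_sub_of_summable hsucc) (by rw [hsplit]; positivity)]
  rw [hsplit] at hpm ⊢
  field_simp
  apply mul_right_cancel₀ hE.ne'
  linear_combination hpm

end Real

end GaussTheta

open GaussTheta in
/-- Gauss's identity: the infinite product `∏_{k ≥ 1} (1 + x^k)/(1 - x^k)` is the reciprocal
of the Jacobi theta function `θ₄(0, x) = ∑_{n ∈ ℤ} (-1)^n x^(n²)`, for real `|x| < 1`. -/
theorem stmt_10 (x : ℝ) (hx : |x| < 1) :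
    (∑' n : ℤ, (-1 : ℝ) ^ n * x ^ n.natAbs ^ 2) *
      (∏' k : ℕ, (1 + x ^ (k + 1)) / (1 - x ^ (k + 1))) = 1 := by
  rw [tsum_neg_one_zpow_mul_pow_natAbs_sq hx, mul_comm]
  exact tprod_one_add_div_one_sub_mul_eq_one hx
end

section
/- Let s ≥ 3 be an odd integer. For every positive integer n, the sum over j from 0 to n of (the number of partitions of j into distinct parts none of which is divisible by s) times (the number of partitions of n − j into parts none of which is divisible by s) equals the number of partitions of 2n in which no part is divisible by s and every odd part occurs with even multiplicity (even parts being unrestricted). -/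
/-!
A pair `(D, P)` of partitions of `j` and `n - j`, with `D` into distinct parts, is sent to the
partition of `2 n` made of the parts `2 p` for `p ∈ P` together with, for each part `2 ^ k * o`
of `D` with `o` odd, `2 ^ (k + 1)` copies of `o`; this is Glaisher's splitting of `D` into odd
parts, taken twice. Conversely, halving the even parts recovers `P`, and an odd part `o` of
multiplicity `2 c` recovers the parts `2 ^ k * o` of `D`, one for each binary digit `k` of `c`.
As `s` is odd, `s ∣ 2 ^ k * o ↔ s ∣ o`, so neither direction creates a part divisible by `s`.
-/

namespace Nat

lemma factorization_two_pow_mul {k o : ℕ} (ho : ¬ 2 ∣ o) : (2 ^ k * o).factorization 2 = k := by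
  have ho0 : o ≠ 0 := by rintro rfl; exact ho (dvd_zero 2)
  rw [factorization_mul (pow_ne_zero _ two_ne_zero) ho0, Finsupp.add_apply,
    Nat.Prime.factorization_pow prime_two, Finsupp.single_eq_same,
    factorization_eq_zero_of_not_dvd ho, add_zero]

lemma ordCompl_two_pow_mul {k o : ℕ} (ho : ¬ 2 ∣ o) : ordCompl[2] (2 ^ k * o) = o := by
  rw [factorization_two_pow_mul ho, Nat.mul_div_cancel_left _ (Nat.two_pow_pos k)]

lemma two_pow_mul_inj {k k' o o' : ℕ} (ho : ¬ 2 ∣ o) (ho' : ¬ 2 ∣ o') :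
    2 ^ k * o = 2 ^ k' * o' ↔ k = k' ∧ o = o' := by
  refine ⟨fun h => ⟨?_, ?_⟩, by rintro ⟨rfl, rfl⟩; rfl⟩
  · simpa [factorization_two_pow_mul ho, factorization_two_pow_mul ho'] using
      congrArg (·.factorization 2) h
  · simpa [ordCompl_two_pow_mul ho, ordCompl_two_pow_mul ho'] using
      congrArg (fun i => ordCompl[2] i) h

end Nat

namespace Multiset

def oddSplit (D : Multiset ℕ) : Multiset ℕ :=
  D.bind fun i => replicate (ordProj[2] i) (ordCompl[2] i)

lemma sum_oddSplit (D : Multiset ℕ) : (oddSplit D).sum = D.sum := by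
  simp [oddSplit, sum_bind, Nat.ordProj_mul_ordCompl_eq_self]

lemma not_two_dvd_of_mem_oddSplit {D : Multiset ℕ} (hD : 0 ∉ D) {o : ℕ}
    (h : o ∈ oddSplit D) : ¬ 2 ∣ o := by
  obtain ⟨i, hi, ho⟩ := mem_bind.1 h
  rw [eq_of_mem_replicate ho]
  exact Nat.not_dvd_ordCompl Nat.prime_two (ne_of_mem_of_not_mem hi hD)

lemma count_oddSplit_of_nodup {D : Multiset ℕ} (hD : D.Nodup) (o : ℕ) :
    count o (oddSplit D) = ∑ i ∈ D.toFinset with ordCompl[2] i = o, ordProj[2] i := by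
  rw [oddSplit, count_bind, Finset.sum_filter, Finset.sum_eq_multiset_sum,
    toFinset_val, dedup_eq_self.2 hD]
  congr 1
  refine map_congr rfl fun i _ => ?_
  simp [count_replicate, eq_comm]

/-- For `D` without repeated parts, the multiplicity of `o` in `oddSplit D` is the sum of the
`2 ^ k` with `2 ^ k * o ∈ D`, so its binary digits recover these `k`. -/
lemma mem_bitIndices_count_oddSplit {D : Multiset ℕ} (hD : D.Nodup) {o : ℕ} (ho : ¬ 2 ∣ o)
    (k : ℕ) :
    k ∈ (count o (oddSplit D)).bitIndices ↔ 2 ^ k * o ∈ D := by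
  have hsplit : ∀ i ∈ D, 2 ^ i.factorization 2 * ordCompl[2] i = i :=
    fun i _ => Nat.ordProj_mul_ordCompl_eq_self i 2
  have hinj : Set.InjOn (fun i : ℕ => i.factorization 2)
      ({i ∈ D.toFinset | ordCompl[2] i = o} : Finset ℕ) := by
    intro i hi j hj (hij : i.factorization 2 = j.factorization 2)
    simp only [Finset.coe_filter, mem_toFinset, Set.mem_ofPred_eq] at hi hj
    rw [← hsplit i hi.1, ← hsplit j hj.1, hi.2, hj.2, hij]
  rw [count_oddSplit_of_nodup hD, ← Finset.sum_image (f := (2 ^ ·)) hinj,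
    ← List.mem_toFinset, Finset.toFinset_bitIndices_sum_two_pow]
  simp only [Finset.mem_image, Finset.mem_filter, mem_toFinset]
  constructor
  · rintro ⟨i, ⟨hi, rfl⟩, rfl⟩
    rwa [hsplit i hi]
  · intro h
    exact ⟨_, ⟨h, Nat.ordCompl_two_pow_mul ho⟩, Nat.factorization_two_pow_mul ho⟩

def assemble (D P : Multiset ℕ) : Multiset ℕ := P.map (2 * ·) + 2 • oddSplit D

def halfEvens (L : Multiset ℕ) : Multiset ℕ := (L.filter (2 ∣ ·)).map (· / 2)

def distinctPartsOf (L : Multiset ℕ) : Multiset ℕ :=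
  (L.toFinset.filter (¬ 2 ∣ ·)).val.bind
    fun o => ((count o L / 2).bitIndices.map (2 ^ · * o) : Multiset ℕ)

lemma sum_assemble (D P : Multiset ℕ) : (assemble D P).sum = 2 * (D.sum + P.sum) := by
  rw [assemble, sum_add, sum_map_mul_left, map_id', sum_nsmul, sum_oddSplit, smul_eq_mul]
  ring

lemma count_assemble_two_mul {D : Multiset ℕ} (hD : 0 ∉ D) (P : Multiset ℕ) (a : ℕ) :
    count (2 * a) (assemble D P) = count a P := by
  rw [assemble, count_add, count_map_eq_count' _ _ (fun x y h => by omega), count_nsmul,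
    count_eq_zero.2 fun h => not_two_dvd_of_mem_oddSplit hD h (dvd_mul_right 2 a),
    mul_zero, add_zero]

lemma count_assemble_of_not_two_dvd (D P : Multiset ℕ) {o : ℕ} (ho : ¬ 2 ∣ o) :
    count o (assemble D P) = 2 * count o (oddSplit D) := by
  rw [assemble, count_add, count_nsmul, count_eq_zero.2, zero_add]
  rintro h
  obtain ⟨a, -, rfl⟩ := mem_map.1 h
  exact ho (dvd_mul_right 2 a)

lemma count_halfEvens (L : Multiset ℕ) (a : ℕ) : count a (halfEvens L) = count (2 * a) L := by
  rw [halfEvens, count_map, filter_filter, count_eq_card_filter_eq]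
  congr 1
  exact filter_congr fun x _ => by omega

lemma mem_distinctPartsOf {L : Multiset ℕ} {i : ℕ} :
    i ∈ distinctPartsOf L ↔ ∃ o ∈ L, ¬ 2 ∣ o ∧ ∃ k ∈ (count o L / 2).bitIndices, 2 ^ k * o = i := by
  simp [distinctPartsOf, and_assoc]

lemma two_pow_mul_mem_distinctPartsOf {L : Multiset ℕ} {k o : ℕ} (ho : ¬ 2 ∣ o) :
    2 ^ k * o ∈ distinctPartsOf L ↔ k ∈ (count o L / 2).bitIndices := by
  rw [mem_distinctPartsOf]
  constructor
  · rintro ⟨o', -, ho', k', hk', h⟩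
    obtain ⟨rfl, rfl⟩ := (Nat.two_pow_mul_inj ho' ho).1 h
    exact hk'
  · intro hk
    have : o ∈ L := by
      by_contra h
      simp [count_eq_zero.2 h] at hk
    exact ⟨o, this, ho, k, hk, rfl⟩

lemma zero_notMem_distinctPartsOf (L : Multiset ℕ) : 0 ∉ distinctPartsOf L := by
  rw [mem_distinctPartsOf]
  rintro ⟨o, -, ho, k, -, h⟩
  rcases mul_eq_zero.1 h with h | rfl
  · exact pow_ne_zero k two_ne_zero h
  · exact ho (dvd_zero 2)

lemma nodup_distinctPartsOf (L : Multiset ℕ) : (distinctPartsOf L).Nodup := by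
  refine nodup_bind.2 ⟨fun o ho => ?_, (Finset.nodup _).pairwise fun o ho o' ho' hne => ?_⟩
  · have ho : ¬ 2 ∣ o := (Finset.mem_filter.1 ho).2
    exact coe_nodup.2 <| Nat.bitIndices_nodup.map fun k k' h => ((Nat.two_pow_mul_inj ho ho).1 h).1
  · have ho : ¬ 2 ∣ o := (Finset.mem_filter.1 ho).2
    have ho' : ¬ 2 ∣ o' := (Finset.mem_filter.1 ho').2
    refine disjoint_left.2 fun {i} hi hi' => hne ?_
    simp only [mem_coe, List.mem_map] at hi hi'
    obtain ⟨k, -, rfl⟩ := hi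
    obtain ⟨k', -, h⟩ := hi'
    exact ((Nat.two_pow_mul_inj ho' ho).1 h).2.symm

lemma count_oddSplit_distinctPartsOf (L : Multiset ℕ) {o : ℕ} (ho : ¬ 2 ∣ o) :
    count o (oddSplit (distinctPartsOf L)) = count o L / 2 :=
  Finset.equivBitIndices.injective <| Finset.ext fun k => by
    simp only [Finset.equivBitIndices_apply, List.mem_toFinset,
      mem_bitIndices_count_oddSplit (nodup_distinctPartsOf L) ho,
      two_pow_mul_mem_distinctPartsOf ho]

lemma halfEvens_assemble {D : Multiset ℕ} (hD : 0 ∉ D) (P : Multiset ℕ) :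
    halfEvens (assemble D P) = P :=
  ext.2 fun a => by rw [count_halfEvens, count_assemble_two_mul hD]

lemma distinctPartsOf_assemble {D : Multiset ℕ} (hD : D.Nodup) (h0 : 0 ∉ D) (P : Multiset ℕ) :
    distinctPartsOf (assemble D P) = D := by
  refine ((nodup_distinctPartsOf _).ext hD).2 fun i => ?_
  rcases eq_or_ne i 0 with rfl | hi
  · exact iff_of_false (zero_notMem_distinctPartsOf _) h0
  · have ho := Nat.not_dvd_ordCompl Nat.prime_two hi
    rw [← Nat.ordProj_mul_ordCompl_eq_self i 2, two_pow_mul_mem_distinctPartsOf ho,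
      count_assemble_of_not_two_dvd _ _ ho, Nat.mul_div_cancel_left _ two_pos,
      mem_bitIndices_count_oddSplit hD ho]

lemma assemble_distinctPartsOf_halfEvens {L : Multiset ℕ}
    (hL : ∀ o, ¬ 2 ∣ o → 2 ∣ count o L) : assemble (distinctPartsOf L) (halfEvens L) = L := by
  ext m
  by_cases hm : 2 ∣ m
  · obtain ⟨a, rfl⟩ := hm
    rw [count_assemble_two_mul (zero_notMem_distinctPartsOf L), count_halfEvens]
  · rw [count_assemble_of_not_two_dvd _ _ hm, count_oddSplit_distinctPartsOf L hm,
      Nat.mul_div_cancel' (hL m hm)]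

lemma zero_notMem_assemble {D P : Multiset ℕ} (hD : 0 ∉ D) (hP : 0 ∉ P) :
    0 ∉ assemble D P := by
  rw [assemble, mem_add, mem_map, mem_nsmul_of_ne_zero two_ne_zero, not_or, not_exists]
  exact ⟨fun a ha => hP (by grind), fun h => not_two_dvd_of_mem_oddSplit hD h (dvd_zero 2)⟩

lemma zero_notMem_halfEvens {L : Multiset ℕ} (hL : 0 ∉ L) : 0 ∉ halfEvens L := by
  rw [halfEvens, mem_map]
  rintro ⟨x, hx, h⟩
  rw [mem_filter] at hx
  obtain ⟨a, rfl⟩ := hx.2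
  exact hL (by grind)

lemma not_dvd_of_mem_halfEvens {s : ℕ} {L : Multiset ℕ} (hL : ∀ i ∈ L, ¬ s ∣ i) :
    ∀ m ∈ halfEvens L, ¬ s ∣ m := by
  intro m hm hsm
  obtain ⟨x, hx, rfl⟩ := mem_map.1 hm
  rw [mem_filter] at hx
  obtain ⟨a, rfl⟩ := hx.2
  rw [Nat.mul_div_cancel_left a two_pos] at hsm
  exact hL _ hx.1 (hsm.mul_left 2)

section NotDvd

variable {s : ℕ} (hs : Odd s)
include hs

lemma not_dvd_of_mem_assemble {D P : Multiset ℕ} (hD : ∀ i ∈ D, ¬ s ∣ i)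
    (hP : ∀ i ∈ P, ¬ s ∣ i) : ∀ m ∈ assemble D P, ¬ s ∣ m := by
  intro m hm hsm
  rcases mem_add.1 hm with h | h
  · obtain ⟨a, ha, rfl⟩ := mem_map.1 h
    exact hP a ha (hs.coprime_two_right.dvd_of_dvd_mul_left hsm)
  · obtain ⟨i, hi, hm⟩ := mem_bind.1 ((mem_nsmul_of_ne_zero two_ne_zero).1 h)
    rw [eq_of_mem_replicate hm] at hsm
    exact hD i hi (hsm.trans (Nat.ordCompl_dvd i 2))

lemma not_dvd_of_mem_distinctPartsOf {L : Multiset ℕ} (hL : ∀ i ∈ L, ¬ s ∣ i) :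
    ∀ m ∈ distinctPartsOf L, ¬ s ∣ m := by
  intro m hm hsm
  obtain ⟨o, hoL, -, k, -, rfl⟩ := mem_distinctPartsOf.1 hm
  exact hL o hoL ((hs.coprime_two_right.pow_right k).dvd_of_dvd_mul_left hsm)

end NotDvd

end Multiset

abbrev DistinctNotDvdPartition (s n : ℕ) : Type :=
  {p : n.Partition // (∀ i, p.parts.count i ≤ 1) ∧ ∀ i ∈ p.parts, ¬ s ∣ i}

abbrev NotDvdPartition (s n : ℕ) : Type := {p : n.Partition // ∀ i ∈ p.parts, ¬ s ∣ i}

abbrev NotDvdEvenMultPartition (s n : ℕ) : Type :=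
  {p : n.Partition // (∀ i ∈ p.parts, ¬ s ∣ i) ∧ ∀ k, Odd k → Even (p.parts.count k)}

open Multiset

lemma Nat.Partition.zero_notMem_parts {n : ℕ} (p : n.Partition) : 0 ∉ p.parts :=
  fun h => (p.parts_pos h).false

section AssemblePartition

variable {s : ℕ} (hs : Odd s) (n : ℕ)

def assemblePartition :
    (Σ j : Fin (n + 1), DistinctNotDvdPartition s j × NotDvdPartition s (n - j)) →
      NotDvdEvenMultPartition s (2 * n)
  | ⟨j, D, P⟩ =>
    ⟨⟨assemble D.1.parts P.1.parts,
        fun h => Nat.pos_of_ne_zero (ne_of_mem_of_not_mem h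
          (zero_notMem_assemble D.1.zero_notMem_parts P.1.zero_notMem_parts)),
        by rw [sum_assemble, D.1.parts_sum, P.1.parts_sum]; omega⟩,
      not_dvd_of_mem_assemble hs D.2.2 P.2,
      fun k hk => by
        rw [count_assemble_of_not_two_dvd _ _ (Nat.not_even_iff_odd.2 hk ∘ even_iff_two_dvd.2)]
        exact even_two_mul _⟩

lemma assemblePartition_injective : Function.Injective (assemblePartition hs n) := by
  rintro ⟨j, D, P⟩ ⟨j', D', P'⟩ h
  have h : assemble D.1.parts P.1.parts = assemble D'.1.parts P'.1.parts :=
    congrArg (·.1.parts) h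
  have hnodup {m : ℕ} (D : DistinctNotDvdPartition s m) : D.1.parts.Nodup :=
    nodup_iff_count_le_one.2 D.2.1
  have hD : D.1.parts = D'.1.parts := by
    rw [← distinctPartsOf_assemble (hnodup D) D.1.zero_notMem_parts P.1.parts, h,
      distinctPartsOf_assemble (hnodup D') D'.1.zero_notMem_parts]
  have hP : P.1.parts = P'.1.parts := by
    rw [← halfEvens_assemble D.1.zero_notMem_parts P.1.parts, h,
      halfEvens_assemble D'.1.zero_notMem_parts]
  obtain rfl : j = j' := Fin.ext (by rw [← D.1.parts_sum, ← D'.1.parts_sum, hD])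
  obtain rfl : D = D' := Subtype.ext (Nat.Partition.ext hD)
  obtain rfl : P = P' := Subtype.ext (Nat.Partition.ext hP)
  rfl

lemma assemblePartition_surjective : Function.Surjective (assemblePartition hs n) := by
  rintro ⟨L, hLs, hLodd⟩
  have hL : ∀ o, ¬ 2 ∣ o → 2 ∣ count o L.parts := fun o ho =>
    (hLodd o (Nat.not_even_iff_odd.1 (ho ∘ even_iff_two_dvd.1))).two_dvd
  have hsum : (distinctPartsOf L.parts).sum + (halfEvens L.parts).sum = n := by
    have := sum_assemble (distinctPartsOf L.parts) (halfEvens L.parts)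
    rw [assemble_distinctPartsOf_halfEvens hL, L.parts_sum] at this
    omega
  refine ⟨⟨⟨(distinctPartsOf L.parts).sum, by omega⟩,
    ⟨⟨distinctPartsOf L.parts, fun h => Nat.pos_of_ne_zero
        (ne_of_mem_of_not_mem h (zero_notMem_distinctPartsOf _)), rfl⟩,
      nodup_iff_count_le_one.1 (nodup_distinctPartsOf _), not_dvd_of_mem_distinctPartsOf hs hLs⟩,
    ⟨⟨halfEvens L.parts, fun h => Nat.pos_of_ne_zero
        (ne_of_mem_of_not_mem h (zero_notMem_halfEvens L.zero_notMem_parts)),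
        by dsimp only; omega⟩,
      not_dvd_of_mem_halfEvens hLs⟩⟩, ?_⟩
  exact Subtype.ext (Nat.Partition.ext (assemble_distinctPartsOf_halfEvens hL))

end AssemblePartition

theorem stmt_11_general (s : ℕ) (hodd : Odd s) (n : ℕ) :
    (∑ j ∈ Finset.range (n + 1),
        Nat.card {p : j.Partition // (∀ i, p.parts.count i ≤ 1) ∧ ∀ i ∈ p.parts, ¬ s ∣ i} *
          Nat.card {p : (n - j).Partition // ∀ i ∈ p.parts, ¬ s ∣ i}) =
      Nat.card {p : (2 * n).Partition //
        (∀ i ∈ p.parts, ¬ s ∣ i) ∧ ∀ k, Odd k → Even (p.parts.count k)} := by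
  simp only [← Nat.card_prod]
  rw [Finset.sum_range, ← Nat.card_sigma]
  exact Nat.card_eq_of_bijective _
    ⟨assemblePartition_injective hodd n, assemblePartition_surjective hodd n⟩

/-- For odd `s ≥ 3`, the convolution of the number of partitions into distinct parts prime to
`s` with the number of partitions into parts prime to `s` equals the number of partitions of
`2n` with no part divisible by `s` and every odd part occurring with even multiplicity. -/
theorem stmt_11 (s : ℕ) (hs : 3 ≤ s) (hodd : Odd s) (n : ℕ) (hn : 0 < n) :
    (∑ j ∈ Finset.range (n + 1),
        Nat.card {p : j.Partition // (∀ i, p.parts.count i ≤ 1) ∧ ∀ i ∈ p.parts, ¬ s ∣ i} *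
          Nat.card {p : (n - j).Partition // ∀ i ∈ p.parts, ¬ s ∣ i}) =
      Nat.card {p : (2 * n).Partition //
        (∀ i ∈ p.parts, ¬ s ∣ i) ∧ ∀ k, Odd k → Even (p.parts.count k)} :=
  stmt_11_general s hodd n
end

section
/- For every integer s ≥ 1 and every real number x with |x| < 1, ∏_{k=1}^∞ [(1 + x^k)(1 − x^(sk))] / [(1 − x^k)(1 + x^(sk))] = ∏_{k=1}^∞ [(1 − x^(sk))(1 − x^(s(2k−1)))] / [(1 − x^k)(1 − x^(2k−1))]. -/
/-!
Over any complete normed field and for `‖y‖ < 1`, Euler's identity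
`∏ (1 + y^k) · ∏ (1 - y^(2k-1)) = 1` holds: `(1 + y^k)(1 - y^k) = 1 - y^(2k)`, and splitting
`∏ (1 - y^k)` into odd and even `k` gives `∏ (1 - y^k) = ∏ (1 - y^(2k-1)) · ∏ (1 - y^(2k))`,
so the nonzero factor `∏ (1 - y^(2k))` cancels. Both sides of the theorem split into quotients
of four convergent products, which agree after Euler's identity at `y = x` and `y = x^s`.
-/

open Function

section Euler

variable {K : Type*} [NormedField K] {y : K}

lemma norm_pow_lt_one (hy : ‖y‖ < 1) {n : ℕ} (hn : n ≠ 0) : ‖y ^ n‖ < 1 := by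
  rw [norm_pow]
  exact pow_lt_one₀ (norm_nonneg y) hy hn

lemma summable_norm_pow_comp (hy : ‖y‖ < 1) {e : ℕ → ℕ} (he : Injective e) :
    Summable fun k => ‖y ^ e k‖ :=
  ((summable_geometric_of_lt_one (norm_nonneg y) hy).comp_injective he).congr fun k =>
    (norm_pow y (e k)).symm

lemma multipliable_one_add_pow [CompleteSpace K] (hy : ‖y‖ < 1) {e : ℕ → ℕ} (he : Injective e) :
    Multipliable fun k => 1 + y ^ e k :=
  multipliable_one_add_of_summable (summable_norm_pow_comp hy he)

lemma multipliable_one_sub_pow [CompleteSpace K] (hy : ‖y‖ < 1) {e : ℕ → ℕ} (he : Injective e) :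
    Multipliable fun k => 1 - y ^ e k := by
  simpa only [sub_eq_add_neg] using
    multipliable_one_add_of_summable (f := fun k => -y ^ e k)
      (by simpa only [norm_neg] using summable_norm_pow_comp hy he)

lemma tprod_one_sub_pow_succ_ne_zero [CompleteSpace K] (hy : ‖y‖ < 1) :
    ∏' k : ℕ, (1 - y ^ (k + 1)) ≠ 0 := by
  simp_rw [sub_eq_add_neg]
  refine tprod_one_add_ne_zero_of_summable (fun k => ?_) ?_
  · rw [← sub_eq_add_neg, sub_ne_zero]
    intro h
    simpa [← h] using norm_pow_lt_one hy k.succ_ne_zero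
  · simpa only [norm_neg] using summable_norm_pow_comp hy (add_left_injective 1)

theorem tprod_one_add_pow_mul_tprod_one_sub_odd_pow [CompleteSpace K] (hy : ‖y‖ < 1) :
    (∏' k : ℕ, (1 + y ^ (k + 1))) * ∏' k : ℕ, (1 - y ^ (2 * k + 1)) = 1 := by
  have h_even_odd : (∏' k : ℕ, (1 - y ^ (2 * k + 1))) * ∏' k : ℕ, (1 - (y ^ 2) ^ (k + 1)) =
      ∏' k : ℕ, (1 - y ^ (k + 1)) := by
    simp_rw [← pow_mul]
    exact tprod_even_mul_odd (f := fun n => 1 - y ^ (n + 1))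
      (multipliable_one_sub_pow hy (StrictMono.injective fun _ _ h => by omega))
      (multipliable_one_sub_pow hy (e := fun k => 2 * (k + 1))
        (StrictMono.injective fun _ _ h => by omega))
  have h_sq : (∏' k : ℕ, (1 + y ^ (k + 1))) * ∏' k : ℕ, (1 - y ^ (k + 1)) =
      ∏' k : ℕ, (1 - (y ^ 2) ^ (k + 1)) := by
    rw [← (multipliable_one_add_pow hy (add_left_injective 1)).tprod_mul
      (multipliable_one_sub_pow hy (add_left_injective 1))]
    congr 1 with k
    ring
  refine mul_right_cancel₀ (tprod_one_sub_pow_succ_ne_zero (norm_pow_lt_one hy two_ne_zero)) ?_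
  rw [one_mul, mul_assoc, h_even_odd, h_sq]

theorem tprod_one_add_pow_div_eq_tprod_one_sub_odd_pow_div [CompleteSpace K] {x : K}
    (hx : ‖x‖ < 1) (hy : ‖y‖ < 1) :
    ∏' k : ℕ, ((1 + x ^ (k + 1)) * (1 - y ^ (k + 1))) / ((1 - x ^ (k + 1)) * (1 + y ^ (k + 1))) =
      ∏' k : ℕ, ((1 - y ^ (k + 1)) * (1 - y ^ (2 * k + 1))) /
        ((1 - x ^ (k + 1)) * (1 - x ^ (2 * k + 1))) := by
  have hP {z : K} (hz : ‖z‖ < 1) := (multipliable_one_add_pow hz (add_left_injective 1)).hasProd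
  have hM {z : K} (hz : ‖z‖ < 1) := (multipliable_one_sub_pow hz (add_left_injective 1)).hasProd
  have hO {z : K} (hz : ‖z‖ < 1) :=
    (multipliable_one_sub_pow hz (e := fun k => 2 * k + 1)
      (StrictMono.injective fun _ _ h => by omega)).hasProd
  have hEx := tprod_one_add_pow_mul_tprod_one_sub_odd_pow hx
  have hEy := tprod_one_add_pow_mul_tprod_one_sub_odd_pow hy
  rw [(((hP hx).mul (hM hy)).div₀ ((hM hx).mul (hP hy))
      (mul_ne_zero (tprod_one_sub_pow_succ_ne_zero hx) (left_ne_zero_of_mul_eq_one hEy))).tprod_eq,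
    (((hM hy).mul (hO hy)).div₀ ((hM hx).mul (hO hx))
      (mul_ne_zero (tprod_one_sub_pow_succ_ne_zero hx) (right_ne_zero_of_mul_eq_one hEx))).tprod_eq,
    eq_inv_of_mul_eq_one_right hEx, eq_inv_of_mul_eq_one_right hEy]
  field_simp

end Euler

/-- For `s ≥ 1` and real `|x| < 1`,
`∏_{k ≥ 1} (1 + x^k)(1 - x^{sk}) / ((1 - x^k)(1 + x^{sk}))`
equals
`∏_{k ≥ 1} (1 - x^{sk})(1 - x^{s(2k-1)}) / ((1 - x^k)(1 - x^{2k-1}))`. -/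
theorem stmt_12 (s : ℕ) (hs : 1 ≤ s) (x : ℝ) (hx : |x| < 1) :
    (∏' k : ℕ, ((1 + x ^ (k + 1)) * (1 - x ^ (s * (k + 1)))) /
        ((1 - x ^ (k + 1)) * (1 + x ^ (s * (k + 1))))) =
      ∏' k : ℕ, ((1 - x ^ (s * (k + 1))) * (1 - x ^ (s * (2 * k + 1)))) /
        ((1 - x ^ (k + 1)) * (1 - x ^ (2 * k + 1))) := by
  simp_rw [pow_mul]
  exact tprod_one_add_pow_div_eq_tprod_one_sub_odd_pow_div hx (norm_pow_lt_one hx (by omega))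
end

section
/- For every complex number t with Re t > 1, ∑_{n=1}^∞ 2^(ω(n)) · n^(−t) = ζ(t)² / ζ(2t), where ω(n) is the number of distinct prime factors of n (with ω(1) = 0) and ζ denotes the Riemann zeta function. -/
/-!
Counting squarefree divisors gives `2 ^ ω(n) = ∑_{d ∣ n} μ(d)²`, and writing `n = b² a` with `a`
squarefree, the `k` with `k² ∣ n` are exactly the divisors of `b`, so
`μ(n)² = [b = 1] = ∑_{k² ∣ n} μ(k)`. Hence `2 ^ ω = 1 ⍟ 1 ⍟ g` with `g(k²) = μ(k)` and `g = 0` off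
the squares, and `L g s = L μ (2s) = 1 / ζ(2s)`.
-/

open ArithmeticFunction LSeries Finset
open scoped ArithmeticFunction.Moebius ArithmeticFunction.zeta LSeries.notation

lemma Nat.dvd_of_sq_dvd_sq_mul {a b k : ℕ} (ha : Squarefree a) (h : k ^ 2 ∣ b ^ 2 * a) :
    k ∣ b := by
  rcases Nat.eq_zero_or_pos (k.gcd b) with hgcd | hgcd
  · simp [(Nat.gcd_eq_zero_iff.mp hgcd).2]
  obtain ⟨g, k', b', hg, hcop, rfl, rfl⟩ := Nat.exists_coprime' hgcd
  have h' : k' ^ 2 ∣ b' ^ 2 * a := by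
    rw [mul_pow, mul_pow, mul_right_comm] at h
    exact Nat.dvd_of_mul_dvd_mul_right (pow_pos hg 2) h
  have hk' : k' = 1 := Nat.isUnit_iff.mp <| ha k' <| by
    rw [← sq]; exact (hcop.pow 2 2).dvd_of_dvd_mul_left h'
  simp [hk']

lemma Nat.squarefree_sq_mul_iff {a b : ℕ} (ha : Squarefree a) :
    Squarefree (b ^ 2 * a) ↔ b = 1 := by
  refine ⟨fun h ↦ Nat.isUnit_iff.mp (h b ⟨a, by ring⟩), ?_⟩
  rintro rfl
  simpa using ha

noncomputable def onSquares {R : Type*} [Zero R] (f : ℕ → R) (n : ℕ) : R :=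
  if IsSquare n then f n.sqrt else 0

section onSquares

variable {R : Type*}

lemma onSquares_sq [Zero R] (f : ℕ → R) (k : ℕ) : onSquares f (k ^ 2) = f k := by
  rw [onSquares, if_pos ⟨k, sq k⟩, Nat.sqrt_eq']

lemma onSquares_eq_zero_of_notMem_range [Zero R] (f : ℕ → R) {n : ℕ}
    (hn : n ∉ Set.range (· ^ 2 : ℕ → ℕ)) : onSquares f n = 0 :=
  if_neg fun ⟨r, hr⟩ ↦ hn ⟨r, by rw [hr, ← sq]⟩

lemma term_onSquares (f : ℕ → ℂ) (s : ℂ) (k : ℕ) :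
    term (onSquares f) s (k ^ 2) = term f (2 * s) k := by
  rcases eq_or_ne k 0 with rfl | hk
  · simp
  rw [term_of_ne_zero (pow_ne_zero 2 hk), term_of_ne_zero hk, onSquares_sq, Nat.cast_pow,
    ← Complex.natCast_cpow_natCast_mul, Nat.cast_ofNat]

lemma term_onSquares_eq_zero (f : ℕ → ℂ) (s : ℂ) {n : ℕ}
    (hn : n ∉ Set.range (· ^ 2 : ℕ → ℕ)) : term (onSquares f) s n = 0 := by
  simp [term_def, onSquares_eq_zero_of_notMem_range f hn]

lemma LSeries_onSquares (f : ℕ → ℂ) (s : ℂ) : L (onSquares f) s = L f (2 * s) := by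
  rw [LSeries, ← (Nat.pow_left_injective two_ne_zero).tsum_eq
    fun n hn ↦ by_contra fun h ↦ hn (term_onSquares_eq_zero f s h)]
  simp_rw [term_onSquares]; rfl

lemma LSeriesSummable_onSquares_iff {f : ℕ → ℂ} {s : ℂ} :
    LSeriesSummable (onSquares f) s ↔ LSeriesSummable f (2 * s) := by
  rw [LSeriesSummable, ← (Nat.pow_left_injective two_ne_zero).summable_iff
    fun n hn ↦ term_onSquares_eq_zero f s hn]
  simp_rw [Function.comp_def, term_onSquares]; rfl

lemma sum_divisors_onSquares [AddCommMonoid R] (f : ℕ → R) {a b : ℕ} (ha : Squarefree a)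
    (hb : b ≠ 0) : ∑ d ∈ (b ^ 2 * a).divisors, onSquares f d = ∑ k ∈ b.divisors, f k := by
  have hn : b ^ 2 * a ≠ 0 := mul_ne_zero (pow_ne_zero 2 hb) ha.ne_zero
  rw [← sum_congr rfl fun k _ ↦ onSquares_sq f k,
    ← sum_image fun x _ y _ h ↦ Nat.pow_left_injective two_ne_zero h]
  refine (sum_subset (fun d hd ↦ ?_) fun d hd hd' ↦ onSquares_eq_zero_of_notMem_range f ?_).symm
  · obtain ⟨k, hk, rfl⟩ := mem_image.mp hd
    exact Nat.mem_divisors.mpr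
      ⟨(pow_dvd_pow_of_dvd (Nat.dvd_of_mem_divisors hk) 2).mul_right a, hn⟩
  · rintro ⟨k, rfl⟩
    exact hd' <| mem_image_of_mem _ <| Nat.mem_divisors.mpr
      ⟨Nat.dvd_of_sq_dvd_sq_mul ha (Nat.dvd_of_mem_divisors hd), hb⟩

end onSquares

lemma sum_divisors_moebius {R : Type*} [Ring R] (n : ℕ) :
    ∑ d ∈ n.divisors, (μ d : R) = if n = 1 then 1 else 0 := by
  simp_rw [← intCoe_apply]
  rw [← coe_zeta_mul_apply, coe_zeta_mul_coe_moebius, one_apply]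

lemma sum_divisors_onSquares_moebius {R : Type*} [Ring R] {n : ℕ} (hn : n ≠ 0) :
    ∑ d ∈ n.divisors, onSquares (fun k ↦ (μ k : R)) d = (μ n : R) ^ 2 := by
  obtain ⟨a, b, rfl, ha⟩ := Nat.sq_mul_squarefree n
  have hb : b ≠ 0 := by rintro rfl; simp at hn
  rw [sum_divisors_onSquares _ ha hb, sum_divisors_moebius, ← Int.cast_pow, moebius_sq]
  simp only [Nat.squarefree_sq_mul_iff ha]
  split_ifs <;> simp

lemma card_filter_squarefree_divisors {n : ℕ} (hn : n ≠ 0) :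
    #{d ∈ n.divisors | Squarefree d} = 2 ^ #n.primeFactors := by
  rw [card_eq_sum_ones, Nat.sum_divisors_filter_squarefree hn, sum_const, card_powerset,
    Nat.factors_eq, List.toFinset_coe, Nat.toFinset_factors, smul_eq_mul, mul_one]

lemma sum_divisors_moebius_sq {R : Type*} [Ring R] {n : ℕ} (hn : n ≠ 0) :
    ∑ d ∈ n.divisors, (μ d : R) ^ 2 = 2 ^ #n.primeFactors := by
  simp_rw [← Int.cast_pow, moebius_sq, apply_ite, Int.cast_one, Int.cast_zero]
  rw [sum_boole, card_filter_squarefree_divisors hn]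
  push_cast; rfl

lemma LSeries.one_convolution_apply {R : Type*} [Semiring R] (f : ℕ → R) (n : ℕ) :
    (1 ⍟ f) n = ∑ d ∈ n.divisors, f d := by
  simp [convolution_def, Nat.sum_divisorsAntidiagonal' fun _ d ↦ f d]

lemma two_pow_card_primeFactors_eq_convolution {R : Type*} [Ring R] {n : ℕ} (hn : n ≠ 0) :
    (2 : R) ^ #n.primeFactors = (1 ⍟ (1 ⍟ onSquares fun k ↦ (μ k : R))) n := by
  rw [one_convolution_apply, ← sum_divisors_moebius_sq hn]
  refine sum_congr rfl fun d hd ↦ ?_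
  rw [one_convolution_apply, sum_divisors_onSquares_moebius (Nat.pos_of_mem_divisors hd).ne']

lemma LSeries_eq_tsum_succ (f : ℕ → ℂ) (s : ℂ) :
    L f s = ∑' n : ℕ, f (n + 1) * ((n + 1 : ℕ) : ℂ) ^ (-s) := by
  have hsupp : Function.support (term f s) ⊆ Set.range Nat.succ := fun n hn ↦
    Nat.exists_eq_succ_of_ne_zero (by rintro rfl; exact hn (term_zero f s)) |>.imp fun _ ↦ Eq.symm
  rw [LSeries, ← Nat.succ_injective.tsum_eq hsupp]
  simp_rw [term_of_ne_zero (Nat.succ_ne_zero _), Complex.cpow_neg, div_eq_mul_inv]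

lemma LSeries_moebius_eq_inv_riemannZeta {s : ℂ} (hs : 1 < s.re) : L ↗μ s = (riemannZeta s)⁻¹ :=
  eq_inv_of_mul_eq_one_right <| LSeries_one_eq_riemannZeta hs ▸ LSeries_one_mul_Lseries_moebius hs

/-- For `Re t > 1`, `∑_{n ≥ 1} 2^(ω(n)) n^(-t) = ζ(t)² / ζ(2t)`, where `ω(n)` is the number
of distinct prime factors of `n`. -/
theorem stmt_15 (t : ℂ) (ht : 1 < t.re) :
    (∑' n : ℕ, (2 : ℂ) ^ (n + 1 : ℕ).primeFactors.card * ((n + 1 : ℕ) : ℂ) ^ (-t)) =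
      riemannZeta t ^ 2 / riemannZeta (2 * t) := by
  have h2t : 1 < (2 * t).re := by
    simp only [Complex.mul_re, Complex.re_ofNat, Complex.im_ofNat, zero_mul, sub_zero]; linarith
  have hone : LSeriesSummable 1 t := LSeriesSummable_one_iff.mpr ht
  have hsq : LSeriesSummable (onSquares ↗μ) t :=
    LSeriesSummable_onSquares_iff.mpr (ArithmeticFunction.LSeriesSummable_moebius_iff.mpr h2t)
  calc _ = L (fun n ↦ 2 ^ #n.primeFactors) t := (LSeries_eq_tsum_succ _ t).symm
    _ = L (1 ⍟ (1 ⍟ onSquares ↗μ)) t := LSeries_congr two_pow_card_primeFactors_eq_convolution t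
    _ = L 1 t * (L 1 t * L ↗μ (2 * t)) := by
      rw [LSeries_convolution' hone (hone.convolution hsq), LSeries_convolution' hone hsq,
        LSeries_onSquares]
    _ = riemannZeta t ^ 2 / riemannZeta (2 * t) := by
      rw [LSeries_one_eq_riemannZeta ht, LSeries_moebius_eq_inv_riemannZeta h2t]
      ring
end

section
/- Let s ≥ 2 be an integer. For every complex number t with Re t > 1, ∑ n^(−t) = ζ(t)·ζ(st)/ζ(2t), where the sum runs over all positive integers n such that every exponent in the prime factorization of n is congruent to 0 or 1 modulo s, and ζ denotes the Riemann zeta function. -/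
/-!
Both sides are Euler products. Restricting `n ↦ n ^ (-t)` to the admissible `n` keeps it
multiplicative, and its local factor at `p` is `∑_{e ≡ 0, 1 (mod s)} y ^ e = (1 + y) / (1 - y ^ s)`
with `y = p ^ (-t)`. Since `(1 + y) / (1 - y ^ 2) = 1 / (1 - y)`, this is exactly the local factor
of `ζ(t) ζ(st) / ζ(2t)`.
-/

open Complex

theorem Nat.factorization_eq_zero_or_of_coprime {a b : ℕ} (hab : a.Coprime b) (p : ℕ) :
    a.factorization p = 0 ∨ b.factorization p = 0 := by
  by_contra! h
  have hp : p.Prime := Nat.prime_of_mem_primeFactors (Nat.support_factorization a ▸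
    Finsupp.mem_support_iff.mpr h.1)
  exact hp.one_lt.ne' (Nat.eq_one_of_dvd_coprimes hab (Nat.dvd_of_factorization_pos h.1)
    (Nat.dvd_of_factorization_pos h.2))

def HasExponentsIn (S : Set ℕ) (n : ℕ) : Prop :=
  ∀ p : ℕ, p.Prime → n.factorization p ∈ S

section HasExponentsIn

variable {S : Set ℕ}

theorem hasExponentsIn_mul_iff (hS : 0 ∈ S) {a b : ℕ} (hab : a.Coprime b) :
    HasExponentsIn S (a * b) ↔ HasExponentsIn S a ∧ HasExponentsIn S b := by
  simp only [HasExponentsIn, Nat.factorization_mul_apply_of_coprime hab, ← forall_and]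
  refine forall₂_congr fun p _ => ?_
  rcases Nat.factorization_eq_zero_or_of_coprime hab p with h | h <;> simp [h, hS]

theorem hasExponentsIn_prime_pow_iff (hS : 0 ∈ S) {p : ℕ} (hp : p.Prime) (e : ℕ) :
    HasExponentsIn S (p ^ e) ↔ e ∈ S := by
  refine ⟨fun h => by simpa [hp.factorization_pow] using h p hp, fun he q _ => ?_⟩
  rw [hp.factorization_pow, Finsupp.single_apply]
  split_ifs <;> assumption

end HasExponentsIn

theorem Set.indicator_mul_of_mem_mul_iff {M : Type*} [MulZeroOneClass M] {A : Set ℕ}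
    (f : ℕ →* M) {m n : ℕ} (h : m * n ∈ A ↔ m ∈ A ∧ n ∈ A) :
    A.indicator f (m * n) = A.indicator f m * A.indicator f n := by
  by_cases hm : m ∈ A <;> by_cases hn : n ∈ A <;> simp [h, hm, hn]

theorem hasSum_indicator_mod_eq_geometric {K : Type*} [NormedDivisionRing K] [CompleteSpace K]
    {y : K} (hy : ‖y‖ < 1) {r s : ℕ} (hrs : r < s) :
    HasSum ({e | e % s = r}.indicator (y ^ ·)) ((1 - y ^ s)⁻¹ * y ^ r) := by
  have hinj : Function.Injective (fun j : ℕ => s * j + r) := fun a b h => by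
    simpa [(r.zero_le.trans_lt hrs).ne'] using h
  rw [← hinj.hasSum_iff]
  · refine ((hasSum_geometric_of_norm_lt_one ?_).mul_right (y ^ r)).congr_fun fun j => ?_
    · simpa [norm_pow] using pow_lt_one₀ (norm_nonneg y) hy (by omega)
    · simp [Nat.mod_eq_of_lt hrs, pow_add, pow_mul]
  · rintro e he
    refine Set.indicator_of_notMem (s := {e | e % s = r}) (fun hr => he ⟨e / s, ?_⟩) _
    simp only [← hr.out, Nat.div_add_mod]

theorem eulerProduct_hasProd_hasExponentsIn {R : Type*} [NormedCommRing R] [CompleteSpace R]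
    (f : ℕ →*₀ R) (hsum : Summable (‖f ·‖)) {S : Set ℕ} (hS : 0 ∈ S) :
    HasProd (fun p : Nat.Primes => ∑' e, S.indicator (f p ^ ·) e)
      (∑' n : {n : ℕ // 0 < n ∧ HasExponentsIn S n}, f n) := by
  set A : Set ℕ := {n | 0 < n ∧ HasExponentsIn S n}
  have hA : ∀ {m n : ℕ}, m.Coprime n → (m * n ∈ A ↔ m ∈ A ∧ n ∈ A) := fun hmn => by
    simp only [A, Set.mem_ofPred_eq, CanonicallyOrderedAdd.mul_pos, hasExponentsIn_mul_iff hS hmn,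
      and_and_and_comm]
  have h1 : A.indicator f 1 = 1 := by
    simp [A, Set.indicator_of_mem, HasExponentsIn, hS]
  have hsum' : Summable (‖A.indicator f ·‖) :=
    hsum.of_nonneg_of_le (fun _ => norm_nonneg _) fun n => by
      by_cases hn : n ∈ A <;> simp [hn]
  have hprimePow (p : Nat.Primes) (e : ℕ) : A.indicator f (p ^ e) = S.indicator (f p ^ ·) e := by
    have hpe : p.val ^ e ∈ A ↔ e ∈ S := by
      simp [A, p.prop.pos, hasExponentsIn_prime_pow_iff hS p.prop]
    by_cases he : e ∈ S <;> simp [he, hpe]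
  have hEuler := EulerProduct.eulerProduct_hasProd h1
    (fun hmn => Set.indicator_mul_of_mem_mul_iff (f : ℕ →* R) (hA hmn)) hsum' (by simp [A])
  rw [← tsum_subtype A f] at hEuler
  simp only [hprimePow] at hEuler
  exact hEuler

theorem hasSum_indicator_mod_eq_zero_or_one {K : Type*} [NormedDivisionRing K] [CompleteSpace K]
    {y : K} (hy : ‖y‖ < 1) {s : ℕ} (hs : 2 ≤ s) :
    HasSum ({e | e % s = 0 ∨ e % s = 1}.indicator (y ^ ·)) ((1 - y ^ s)⁻¹ * (1 + y)) := by
  have hdisj : Disjoint {e | e % s = 0} {e | e % s = 1} :=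
    Set.disjoint_left.mpr fun e (h0 : e % s = 0) (h1 : e % s = 1) => by omega
  rw [Set.ofPred_or, Set.indicator_union_of_disjoint hdisj]
  convert (hasSum_indicator_mod_eq_geometric hy (r := 0) (s := s) (by omega)).add
    (hasSum_indicator_mod_eq_geometric hy (r := 1) (s := s) (by omega)) using 1
  simp [mul_add]

theorem one_add_mul_inv_one_sub_sq {K : Type*} [Field K] {y : K} (hy : 1 + y ≠ 0) :
    (1 + y) * (1 - y ^ 2)⁻¹ = (1 - y)⁻¹ := by
  rw [show (1 : K) - y ^ 2 = (1 - y) * (1 + y) by ring, mul_inv, mul_left_comm,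
    mul_inv_cancel₀ hy, mul_one]

theorem natCast_cpow_neg_natCast_mul (n k : ℕ) (t : ℂ) :
    (n : ℂ) ^ (-(k * t)) = ((n : ℂ) ^ (-t)) ^ k := by
  rw [← cpow_nat_mul, mul_neg]

theorem one_lt_re_natCast_mul {k : ℕ} (hk : 1 ≤ k) {t : ℂ} (ht : 1 < t.re) :
    1 < ((k : ℂ) * t).re := by
  simpa using one_lt_mul_of_le_of_lt (by exact_mod_cast hk) ht

/-- For `s ≥ 2` and `Re t > 1`, the Dirichlet series over positive integers all of whose
prime-factorization exponents are congruent to `0` or `1` modulo `s` equals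
`ζ(t) ζ(st) / ζ(2t)`. -/
theorem stmt_16 (s : ℕ) (hs : 2 ≤ s) (t : ℂ) (ht : 1 < t.re) :
    (∑' n : {n : ℕ // 0 < n ∧ ∀ p : ℕ, p.Prime →
        n.factorization p % s = 0 ∨ n.factorization p % s = 1}, ((n : ℕ) : ℂ) ^ (-t)) =
      riemannZeta t * riemannZeta (s * t) / riemannZeta (2 * t) := by
  have hst : 1 < ((s : ℂ) * t).re := one_lt_re_natCast_mul (by omega) ht
  have h2t : 1 < ((2 : ℕ) * t).re := one_lt_re_natCast_mul (by omega) ht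
  rw [Nat.cast_ofNat] at h2t
  have hLHS := eulerProduct_hasProd_hasExponentsIn
    (riemannZetaSummandHom (ne_zero_of_one_lt_re ht)) (summable_riemannZetaSummand ht)
    (S := {e | e % s = 0 ∨ e % s = 1}) (by simp)
  rw [eq_div_iff (riemannZeta_ne_zero_of_one_lt_re h2t)]
  refine (hLHS.mul (riemannZeta_eulerProduct_hasProd h2t)).unique ?_
  refine ((riemannZeta_eulerProduct_hasProd ht).mul
    (riemannZeta_eulerProduct_hasProd hst)).congr_fun fun p => ?_
  set y : ℂ := (p : ℂ) ^ (-t)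
  change (∑' e, {e | e % s = 0 ∨ e % s = 1}.indicator (y ^ ·) e) * _ = _
  have hy : ‖y‖ < 1 := (norm_prime_cpow_le_one_half p ht).trans_lt (by norm_num)
  have hy' : 1 + y ≠ 0 := fun h => by
    simp [eq_neg_of_add_eq_zero_right h] at hy
  rw [(hasSum_indicator_mod_eq_zero_or_one hy hs).tsum_eq, ← Nat.cast_ofNat,
    natCast_cpow_neg_natCast_mul, natCast_cpow_neg_natCast_mul, mul_assoc,
    one_add_mul_inv_one_sub_sq hy', mul_comm]
end

section
/- For every complex number s with Re s > 1, ∫_0^∞ t^(s/2 − 1) · (1 − θ₄(t)) dt = 2 · π^(−s/2) · Γ(s/2) · (1 − 2^(1−s)) · ζ(s), where θ₄(t) = ∑_{n ∈ ℤ} (−1)^n e^(−π n² t) for real t > 0, Γ is the Gamma function, and ζ is the Riemann zeta function; the factor (1 − 2^(1−s))·ζ(s) equals the Dirichlet eta function η(s) = ∑_{n=1}^∞ (−1)^(n+1) n^(−s). In other words, up to these explicit factors, the Mellin transform of 1 − θ₄ is the alternating Riemann zeta function. -/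
/-!
Since `(-1)^n = exp(2πi · n/2)`, the series `θ₄` is the cosine kernel `cosKernel (1/2)` of the even
Hurwitz zeta theory, whose Mellin transform (after subtracting the constant term `1`) is the
completed cosine zeta `completedCosZeta (1/2) s = Γℝ(s) ∑_{n ≥ 1} (-1)^n n^(-s)`. Splitting off the
even terms of `ζ(s)` evaluates this alternating series as `(2^(1-s) - 1) ζ(s)`.
-/

open Complex HurwitzZeta

lemma hasSum_neg_one_pow_div_natCast_cpow {s : ℂ} (hs : 1 < s.re) :
    HasSum (fun n : ℕ ↦ (-1 : ℂ) ^ n / (n : ℂ) ^ s) ((2 ^ (1 - s) - 1) * riemannZeta s) := by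
  have hζ : HasSum (fun n : ℕ ↦ 1 / (n : ℂ) ^ s) (riemannZeta s) := by
    rw [zeta_eq_tsum_one_div_nat_cpow hs]
    exact (summable_one_div_nat_cpow.mpr hs).hasSum
  have hdouble : Function.Injective (fun m : ℕ ↦ 2 * m) := mul_right_injective₀ two_ne_zero
  -- `2 / (2m)^s = 2^(1-s) / m^s`, so the even terms of `2 ζ(s)` sum to `2^(1-s) ζ(s)`
  have heven : HasSum (fun n : ℕ ↦ if Even n then 2 / (n : ℂ) ^ s else 0)
      (2 ^ (1 - s) * riemannZeta s) := by
    rw [← hdouble.hasSum_iff fun n hn ↦ if_neg fun he ↦ hn (he.two_dvd.imp fun m hm ↦ hm.symm)]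
    refine (hζ.mul_left (2 ^ (1 - s))).congr_fun fun m ↦ ?_
    have hcast : ((2 * m : ℕ) : ℂ) ^ s = 2 ^ s * (m : ℂ) ^ s := by
      rw [Nat.cast_mul, Nat.cast_ofNat, ← ofReal_ofNat, ← ofReal_natCast,
        mul_cpow_ofReal_nonneg zero_le_two m.cast_nonneg, ofReal_ofNat]
    rw [Function.comp_apply, if_pos (even_two_mul m), hcast, cpow_sub _ _ two_ne_zero, cpow_one]
    field_simp
  rw [sub_one_mul]
  refine (heven.sub hζ).congr_fun fun n ↦ ?_
  rcases n.even_or_odd with hn | hn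
  · rw [if_pos hn, hn.neg_one_pow]
    ring
  · rw [if_neg (Nat.not_even_iff_odd.mpr hn), hn.neg_one_pow]
    ring

lemma completedCosZeta_one_half {s : ℂ} (hs : 1 < s.re) :
    completedCosZeta ((1 / 2 : ℝ) : UnitAddCircle) s =
      Gammaℝ s * ((2 ^ (1 - s) - 1) * riemannZeta s) := by
  refine (hasSum_nat_completedCosZeta _ hs).unique
    (((hasSum_neg_one_pow_div_natCast_cpow hs).mul_left (Gammaℝ s)).congr_fun fun n ↦ ?_)
  rcases eq_or_ne n 0 with rfl | hn
  · rw [if_pos rfl, Nat.cast_zero, zero_cpow (ne_zero_of_one_lt_re hs), div_zero, mul_zero]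
  · rw [if_neg hn, show 2 * Real.pi * (1 / 2) * n = n * Real.pi by ring, Real.cos_nat_mul_pi]
    push_cast
    ring

lemma hasSum_int_neg_one_pow_mul_exp {t : ℝ} (ht : 0 < t) :
    HasSum (fun n : ℤ ↦ (-1 : ℝ) ^ n * Real.exp (-Real.pi * (n : ℝ) ^ 2 * t))
      (cosKernel ((1 / 2 : ℝ) : UnitAddCircle) t) := by
  rw [← hasSum_ofReal]
  refine (hasSum_int_cosKernel (1 / 2) ht).congr_fun fun n ↦ ?_
  rw [show 2 * (Real.pi : ℂ) * I * ((1 / 2 : ℝ) : ℂ) * n = n * (Real.pi * I) by push_cast; ring,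
    exp_int_mul, exp_pi_mul_I]
  push_cast
  rfl

lemma mellin_cosKernel_sub_one (a : UnitAddCircle) {s : ℂ} (hs : 1 < s.re) :
    mellin (fun t ↦ (cosKernel a t : ℂ) - 1) (s / 2) = 2 * completedCosZeta a s := by
  have hs2 : (1 / 2 : ℝ) < (s / 2).re := by
    rw [div_ofNat_re]
    linarith
  rw [completedCosZeta, mul_div_cancel₀ _ two_ne_zero]
  exact ((hurwitzEvenFEPair a).symm.hasMellin hs2).2

/-- For `Re s > 1`, the Mellin-type transform `∫_0^∞ t^(s/2 - 1) (1 - θ₄(t)) dt`, where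
`θ₄(t) = ∑_{n ∈ ℤ} (-1)^n e^(-π n² t)`, equals
`2 π^(-s/2) Γ(s/2) (1 - 2^(1-s)) ζ(s)`, i.e. `2 π^(-s/2) Γ(s/2) η(s)` with `η` the Dirichlet
eta function. -/
theorem stmt_19 (s : ℂ) (hs : 1 < s.re) :
    (∫ t in Set.Ioi (0 : ℝ), (t : ℂ) ^ (s / 2 - 1) *
        (1 - ((∑' n : ℤ, (-1 : ℝ) ^ n * Real.exp (-Real.pi * (n : ℝ) ^ 2 * t) : ℝ) : ℂ))) =
      2 * (Real.pi : ℂ) ^ (-s / 2) * Complex.Gamma (s / 2) *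
        (1 - (2 : ℂ) ^ (1 - s)) * riemannZeta s := by
  have hθ : (∫ t in Set.Ioi (0 : ℝ), (t : ℂ) ^ (s / 2 - 1) *
        (1 - ((∑' n : ℤ, (-1 : ℝ) ^ n * Real.exp (-Real.pi * (n : ℝ) ^ 2 * t) : ℝ) : ℂ))) =
      -mellin (fun t ↦ (cosKernel ((1 / 2 : ℝ) : UnitAddCircle) t : ℂ) - 1) (s / 2) := by
    rw [mellin, ← MeasureTheory.integral_neg]
    refine MeasureTheory.setIntegral_congr_fun measurableSet_Ioi fun t ht ↦ ?_
    rw [(hasSum_int_neg_one_pow_mul_exp ht).tsum_eq, smul_eq_mul]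
    ring
  rw [hθ, mellin_cosKernel_sub_one _ hs, completedCosZeta_one_half hs, Gammaℝ_def]
  ring
end
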